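/- arXiv:1912.08248 — 13 statements merged into one kernel-verified Lean document; each statement's English description precedes it below -/
import Mathlib

section
/- Let n be a positive integer, let η > 1 be a real number, and let H be an n×n Hermitian positive-definite complex matrix. If Â_a and Â_b both belong to Stein_H(η), then the product Â_a·Â_b belongs to Stein_H(η₁), where η₁ = (η + 1/η)/2; explicitly, (η₁−1)·H − (η₁+1)·(Â_a Â_b)*H(Â_a Â_b) is positive definite. -/
open Matrix ComplexOrder

theorem Stein_eta_product_contractive
    (n : ℕ) (hn : 0 < n) (η : ℝ) (hη : 1 < η)
    (H : Matrix (Fin n) (Fin n) ℂ) (hH : H.PosDef)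
    (Aa Ab : Matrix (Fin n) (Fin n) ℂ)
    (hAa : ((η - 1) • H - (η + 1) • (Aaᴴ * H * Aa)).PosDef)
    (hAb : ((η - 1) • H - (η + 1) • (Abᴴ * H * Ab)).PosDef) :
    (((η + 1 / η) / 2 - 1) • H -
      ((η + 1 / η) / 2 + 1) • ((Aa * Ab)ᴴ * H * (Aa * Ab))).PosDef := by
  have hη0 : (0:ℝ) < η := lt_trans one_pos hη
  have hη0' : (η:ℂ) ≠ 0 := by exact_mod_cast hη0.ne'
  refine posDef_iff_dotProduct_mulVec.mpr ⟨?_, ?_⟩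
  · show _ᴴ = _
    simp only [conjTranspose_sub, conjTranspose_smul, conjTranspose_mul,
      conjTranspose_conjTranspose, hH.1.eq, star_trivial, Matrix.mul_assoc]
  · intro x hx
    set y := Ab *ᵥ x with hy
    set z := Aa *ᵥ y with hz
    set a := star x ⬝ᵥ H *ᵥ x with ha
    set b := star y ⬝ᵥ H *ᵥ y with hb
    set c := star z ⬝ᵥ H *ᵥ z with hc
    have key : ∀ (M : Matrix (Fin n) (Fin n) ℂ) (v : Fin n → ℂ) (r : ℝ),
        star v ⬝ᵥ ((r • (Mᴴ * H * M)) *ᵥ v) = (r:ℂ) * (star (M *ᵥ v) ⬝ᵥ H *ᵥ (M *ᵥ v)) := by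
      intro M v r
      rw [smul_mulVec, dotProduct_smul]
      rw [← mulVec_mulVec, ← mulVec_mulVec, dotProduct_mulVec, star_mulVec, ← dotProduct_mulVec,
        Complex.real_smul]
    have keysmul : ∀ (v : Fin n → ℂ) (r : ℝ),
        star v ⬝ᵥ ((r • H) *ᵥ v) = (r:ℂ) * (star v ⬝ᵥ H *ᵥ v) := by
      intro v r
      rw [smul_mulVec, dotProduct_smul, Complex.real_smul]
    have h1 : ((η:ℂ) + 1) * b < ((η:ℂ) - 1) * a := by
      have := hAb.dotProduct_mulVec_pos hx
      rw [sub_mulVec, dotProduct_sub, keysmul, key, Complex.ofReal_sub, Complex.ofReal_add,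
        Complex.ofReal_one] at this
      exact sub_pos.mp this
    have ha' : 0 < a := hH.dotProduct_mulVec_pos hx
    have goal_eq : star x ⬝ᵥ ((((η + 1 / η) / 2 - 1) • H -
        ((η + 1 / η) / 2 + 1) • ((Aa * Ab)ᴴ * H * (Aa * Ab))) *ᵥ x)
        = (((η:ℂ) + 1 / η) / 2 - 1) * a - (((η:ℂ) + 1 / η) / 2 + 1) * c := by
      rw [sub_mulVec, dotProduct_sub, keysmul, key]
      have : (Aa * Ab) *ᵥ x = z := by rw [hz, hy, mulVec_mulVec]
      rw [this]
      push_cast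
      ring
    rw [goal_eq]
    by_cases hy0 : y = 0
    · have hc0 : c = 0 := by simp [hc, hz, hy0]
      rw [hc0, mul_zero, sub_zero]
      apply mul_pos _ ha'
      rw [show (((η:ℂ) + 1 / η) / 2 - 1) = ((((η:ℝ) + 1/η)/2 - 1 : ℝ) : ℂ) by push_cast; ring]
      rw [Complex.zero_lt_real]
      have hinv : η * (1/η) = 1 := mul_one_div_cancel hη0.ne'
      have : 1 < (η + 1/η)/2 := by nlinarith [sq_nonneg (η - 1), one_div_pos.mpr hη0]
      linarith
    · have h2 : ((η:ℂ) + 1) * c < ((η:ℂ) - 1) * b := by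
        have := hAa.dotProduct_mulVec_pos hy0
        rw [sub_mulVec, dotProduct_sub, keysmul, key, Complex.ofReal_sub, Complex.ofReal_add,
          Complex.ofReal_one] at this
        exact sub_pos.mp this
      have hηp : (0:ℂ) < (η:ℂ) + 1 := by
        rw [show ((η:ℂ) + 1) = (((η:ℝ)+1 : ℝ) : ℂ) by push_cast; ring, Complex.zero_lt_real]
        linarith
      have hηm : (0:ℂ) < (η:ℂ) - 1 := by
        rw [show ((η:ℂ) - 1) = (((η:ℝ)-1 : ℝ) : ℂ) by push_cast; ring, Complex.zero_lt_real]
        linarith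
      have step1 : ((η:ℂ)+1) * (((η:ℂ)+1) * c) < ((η:ℂ)+1) * (((η:ℂ)-1) * b) :=
        mul_lt_mul_of_pos_left h2 hηp
      have step2 : ((η:ℂ)-1) * (((η:ℂ)+1) * b) < ((η:ℂ)-1) * (((η:ℂ)-1) * a) :=
        mul_lt_mul_of_pos_left h1 hηm
      have comm : ((η:ℂ)+1) * (((η:ℂ)-1) * b) = ((η:ℂ)-1) * (((η:ℂ)+1) * b) := by ring
      have chain : ((η:ℂ)+1) * (((η:ℂ)+1) * c) < ((η:ℂ)-1) * (((η:ℂ)-1) * a) :=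
        lt_trans (step1.trans_eq comm) step2
      have big : 0 < ((η:ℂ)-1)^2 * a - ((η:ℂ)+1)^2 * c := by
        have e : ((η:ℂ)-1)^2 * a - ((η:ℂ)+1)^2 * c
            = ((η:ℂ)-1) * (((η:ℂ)-1) * a) - ((η:ℂ)+1) * (((η:ℂ)+1) * c) := by ring
        rw [e]
        exact sub_pos.mpr chain
      have factor : (((η:ℂ) + 1 / η) / 2 - 1) * a - (((η:ℂ) + 1 / η) / 2 + 1) * c
          = (1 / (2 * η) : ℂ) * (((η:ℂ)-1)^2 * a - ((η:ℂ)+1)^2 * c) := by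
        field_simp
        ring
      rw [factor]
      apply mul_pos _ big
      rw [show (1 / (2 * (η:ℂ))) = (((1/(2*η) : ℝ)) : ℂ) by push_cast; ring, Complex.zero_lt_real]
      positivity
end

section
/- Let n be a positive integer and let η > 1 be a real number. Let k be a positive integer and let υ_1, …, υ_k be n×n complex matrices satisfying Σ_{j=1}^{k} υ_j* υ_j = I_n. If Â_1, …, Â_k all belong to Stein_{I_n}(η), then the matrix B = Σ_{j=1}^{k} υ_j* Â_j υ_j also belongs to Stein_{I_n}(η); explicitly, (η−1)·I_n − (η+1)·B*B is positive definite. (That is, the set Stein_{I_n}(η) is matrix-convex.) -/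
open Matrix ComplexOrder

namespace SteinAux

variable {n k : ℕ}

noncomputable def sqV (y : Fin n → ℂ) : ℝ := ∑ i, Complex.normSq (y i)

lemma sqV_nonneg (y : Fin n → ℂ) : 0 ≤ sqV y :=
  Finset.sum_nonneg fun _ _ => Complex.normSq_nonneg _

lemma sqV_pos {y : Fin n → ℂ} (hy : y ≠ 0) : 0 < sqV y := by
  rcases (sqV_nonneg y).lt_or_eq with h | h
  · exact h
  · exfalso
    apply hy
    funext i
    have := (Finset.sum_eq_zero_iff_of_nonneg
      (fun i _ => Complex.normSq_nonneg (y i))).mp h.symm i (Finset.mem_univ i)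
    simpa using Complex.normSq_eq_zero.mp this

lemma dot_self (y : Fin n → ℂ) : star y ⬝ᵥ y = (sqV y : ℂ) := by
  simp only [dotProduct, Pi.star_apply, sqV, Complex.ofReal_sum]
  exact Finset.sum_congr rfl fun i _ => by
    rw [Complex.normSq_eq_conj_mul_self]; rfl

lemma dot_conj_mulVec (M : Matrix (Fin n) (Fin n) ℂ) (y z : Fin n → ℂ) :
    star y ⬝ᵥ (Mᴴ *ᵥ z) = star (M *ᵥ y) ⬝ᵥ z := by
  rw [Matrix.star_mulVec, Matrix.dotProduct_mulVec]

lemma quad (η : ℝ) (M : Matrix (Fin n) (Fin n) ℂ) (y : Fin n → ℂ) :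
    star y ⬝ᵥ (((η - 1) • (1 : Matrix (Fin n) (Fin n) ℂ) - (η + 1) • (Mᴴ * M)) *ᵥ y)
      = (((η - 1) * sqV y - (η + 1) * sqV (M *ᵥ y) : ℝ) : ℂ) := by
  rw [Matrix.sub_mulVec, dotProduct_sub, Matrix.smul_mulVec, Matrix.smul_mulVec,
    Matrix.one_mulVec, dotProduct_smul, dotProduct_smul, ← Matrix.mulVec_mulVec,
    dot_conj_mulVec, dot_self, dot_self]
  push_cast
  simp [Complex.real_smul]

lemma sum_mulVec (M : Fin k → Matrix (Fin n) (Fin n) ℂ) (x : Fin n → ℂ) :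
    (∑ j, M j) *ᵥ x = ∑ j, M j *ᵥ x := by
  ext i
  simp only [Matrix.mulVec, dotProduct, Finset.sum_apply, Matrix.sum_apply, Finset.sum_mul]
  exact Finset.sum_comm

lemma dot_sum (v : Fin n → ℂ) (w : Fin k → Fin n → ℂ) :
    v ⬝ᵥ (∑ j, w j) = ∑ j, v ⬝ᵥ w j := by
  simp only [dotProduct, Finset.sum_apply, Finset.mul_sum]
  exact Finset.sum_comm

lemma iso_sq (υ : Fin k → Matrix (Fin n) (Fin n) ℂ)
    (hiso : ∑ j, (υ j)ᴴ * υ j = 1) (y : Fin n → ℂ) :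
    ∑ j, sqV (υ j *ᵥ y) = sqV y := by
  have h : ((∑ j, sqV (υ j *ᵥ y) : ℝ) : ℂ) = ((sqV y : ℝ) : ℂ) := by
    push_cast
    calc (∑ j, (sqV (υ j *ᵥ y) : ℂ))
        = ∑ j, star y ⬝ᵥ ((υ j)ᴴ *ᵥ (υ j *ᵥ y)) := by
          refine Finset.sum_congr rfl fun j _ => ?_
          rw [dot_conj_mulVec, dot_self]
      _ = star y ⬝ᵥ ((∑ j, (υ j)ᴴ * υ j) *ᵥ y) := by
          rw [sum_mulVec, dot_sum]
          simp [Matrix.mulVec_mulVec]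
      _ = (sqV y : ℂ) := by rw [hiso, Matrix.one_mulVec, dot_self]
  exact_mod_cast h

lemma euc_norm_sq (y : Fin n → ℂ) :
    ‖(WithLp.equiv 2 (Fin n → ℂ)).symm y‖ ^ 2 = sqV y := by
  rw [PiLp.norm_sq_eq_of_L2]
  simp [sqV, WithLp.equiv_symm_apply, Complex.sq_norm]

lemma cs (υ : Fin k → Matrix (Fin n) (Fin n) ℂ)
    (hiso : ∑ j, (υ j)ᴴ * υ j = 1) (w : Fin k → Fin n → ℂ) :
    sqV (∑ j, (υ j)ᴴ *ᵥ w j) ≤ ∑ j, sqV (w j) := by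
  set b : Fin n → ℂ := ∑ j, (υ j)ᴴ *ᵥ w j with hb
  set F := PiLp 2 (fun _ : Fin k => EuclideanSpace ℂ (Fin n))
  set U : F := (WithLp.equiv 2 _).symm
    (fun j => (WithLp.equiv 2 (Fin n → ℂ)).symm (υ j *ᵥ b)) with hU
  set W : F := (WithLp.equiv 2 _).symm
    (fun j => (WithLp.equiv 2 (Fin n → ℂ)).symm (w j)) with hW
  have hinner : inner ℂ U W = ((sqV b : ℝ) : ℂ) := by
    rw [PiLp.inner_apply]
    calc (∑ j, inner ℂ (U j) (W j) : ℂ)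
        = ∑ j, star (υ j *ᵥ b) ⬝ᵥ w j := by
          refine Finset.sum_congr rfl fun j _ => ?_
          rw [PiLp.inner_apply]
          simp [hU, hW, dotProduct, RCLike.inner_apply, WithLp.equiv_symm_apply, mul_comm]
      _ = ∑ j, star b ⬝ᵥ ((υ j)ᴴ *ᵥ w j) := by
          refine Finset.sum_congr rfl fun j _ => (dot_conj_mulVec _ _ _).symm
      _ = star b ⬝ᵥ b := by rw [← dot_sum, hb]
      _ = ((sqV b : ℝ) : ℂ) := dot_self b
  have hU2 : ‖U‖ ^ 2 = sqV b := by
    rw [PiLp.norm_sq_eq_of_L2]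
    have : ∀ j, ‖U j‖ ^ 2 = sqV (υ j *ᵥ b) := fun j => euc_norm_sq _
    rw [Finset.sum_congr rfl fun j _ => this j]
    exact iso_sq υ hiso b
  have hW2 : ‖W‖ ^ 2 = ∑ j, sqV (w j) := by
    rw [PiLp.norm_sq_eq_of_L2]
    exact Finset.sum_congr rfl fun j _ => euc_norm_sq _
  have hCS : ‖(inner ℂ U W : ℂ)‖ ≤ ‖U‖ * ‖W‖ := norm_inner_le_norm U W
  rw [hinner] at hCS
  have h1 : sqV b ≤ ‖U‖ * ‖W‖ := by
    rw [Complex.norm_real] at hCS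
    calc sqV b ≤ |sqV b| := le_abs_self _
      _ ≤ ‖U‖ * ‖W‖ := by rwa [Real.norm_eq_abs] at hCS
  nlinarith [norm_nonneg U, norm_nonneg W, sq_nonneg (‖U‖ - ‖W‖)]

lemma stein_le (η : ℝ) {M : Matrix (Fin n) (Fin n) ℂ}
    (h : ((η - 1) • (1 : Matrix (Fin n) (Fin n) ℂ) - (η + 1) • (Mᴴ * M)).PosDef)
    (u : Fin n → ℂ) : (η + 1) * sqV (M *ᵥ u) ≤ (η - 1) * sqV u := by
  have h0 := h.posSemidef.dotProduct_mulVec_nonneg u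
  rw [quad, Complex.zero_le_real] at h0
  linarith

lemma stein_lt (η : ℝ) {M : Matrix (Fin n) (Fin n) ℂ}
    (h : ((η - 1) • (1 : Matrix (Fin n) (Fin n) ℂ) - (η + 1) • (Mᴴ * M)).PosDef)
    {u : Fin n → ℂ} (hu : u ≠ 0) : (η + 1) * sqV (M *ᵥ u) < (η - 1) * sqV u := by
  have h0 := h.dotProduct_mulVec_pos hu
  rw [quad, Complex.zero_lt_real] at h0
  linarith

end SteinAux

open SteinAux in
theorem Stein_eta_matrix_convex
    (n : ℕ) (hn : 0 < n) (η : ℝ) (hη : 1 < η)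
    (k : ℕ) (hk : 0 < k)
    (υ : Fin k → Matrix (Fin n) (Fin n) ℂ)
    (hiso : ∑ j, (υ j)ᴴ * υ j = 1)
    (A : Fin k → Matrix (Fin n) (Fin n) ℂ)
    (hA : ∀ j, ((η - 1) • (1 : Matrix (Fin n) (Fin n) ℂ) -
      (η + 1) • ((A j)ᴴ * A j)).PosDef) :
    ((η - 1) • (1 : Matrix (Fin n) (Fin n) ℂ) -
      (η + 1) • ((∑ j, (υ j)ᴴ * A j * υ j)ᴴ * (∑ j, (υ j)ᴴ * A j * υ j))).PosDef := by
  set B : Matrix (Fin n) (Fin n) ℂ := ∑ j, (υ j)ᴴ * A j * υ j with hBdef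
  rw [Matrix.posDef_iff_dotProduct_mulVec]; constructor
  · apply Matrix.IsHermitian.sub
    · unfold Matrix.IsHermitian
      rw [Matrix.conjTranspose_smul, Matrix.conjTranspose_one, star_trivial]
    · unfold Matrix.IsHermitian
      rw [Matrix.conjTranspose_smul, Matrix.conjTranspose_mul,
        Matrix.conjTranspose_conjTranspose, star_trivial]
  · intro x hx
    rw [quad η B x, Complex.zero_lt_real]
    have hB : B *ᵥ x = ∑ j, (υ j)ᴴ *ᵥ (A j *ᵥ (υ j *ᵥ x)) := by
      rw [hBdef, sum_mulVec]
      exact Finset.sum_congr rfl fun j _ => by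
        rw [Matrix.mulVec_mulVec, Matrix.mulVec_mulVec]
    have hcs : sqV (B *ᵥ x) ≤ ∑ j, sqV (A j *ᵥ (υ j *ᵥ x)) := by
      rw [hB]; exact cs υ hiso _
    have hisoq : ∑ j, sqV (υ j *ᵥ x) = sqV x := iso_sq υ hiso x
    have hxpos : 0 < sqV x := sqV_pos hx
    obtain ⟨j₀, hj₀⟩ : ∃ j, υ j *ᵥ x ≠ 0 := by
      by_contra h
      push_neg at h
      have : ∑ j, sqV (υ j *ᵥ x) = 0 := by
        refine Finset.sum_eq_zero fun j _ => ?_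
        rw [h j]; simp [sqV]
      rw [hisoq] at this
      linarith
    have hlt : ∑ j, (η + 1) * sqV (A j *ᵥ (υ j *ᵥ x)) <
        ∑ j, (η - 1) * sqV (υ j *ᵥ x) := by
      refine Finset.sum_lt_sum (fun j _ => stein_le η (hA j) _) ⟨j₀, Finset.mem_univ _, ?_⟩
      exact stein_lt η (hA j₀) hj₀
    rw [← Finset.mul_sum, ← Finset.mul_sum, hisoq] at hlt
    have hη1 : (0:ℝ) < η + 1 := by linarith
    nlinarith [hcs]
end

section
/- Let n be a positive integer, let η > 1 be a real number, let H be an n×n Hermitian complex matrix, and let A be an n×n complex matrix such that I_n + A is invertible. Set Â = (I_n − A)(I_n + A)^{-1} (the Cayley transform of A). Then (η−1)·H − (η+1)·Â*HÂ is positive definite if and only if A*H + HA − (1/η)·(A*HA + H) is positive definite. (That is, the Cayley transform carries the Stein-type inclusion Stein_H(η) onto the Riccati-type inclusion L_H(η).) -/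
open Matrix ComplexOrder

lemma posDef_conj_of {n : ℕ} {M B : Matrix (Fin n) (Fin n) ℂ}
    (hB : IsUnit B) (hM : M.PosDef) : (Bᴴ * M * B).PosDef := by
  refine Matrix.PosDef.of_dotProduct_mulVec_pos (Matrix.isHermitian_conjTranspose_mul_mul B hM.1) fun x hx => ?_
  have hBx : B *ᵥ x ≠ 0 := fun h => hx (Matrix.mulVec_injective_iff_isUnit.2 hB (h.trans (Matrix.mulVec_zero B).symm))
  simpa only [star_mulVec, dotProduct_mulVec, vecMul_vecMul] using hM.dotProduct_mulVec_pos hBx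

lemma posDef_conj_iff {n : ℕ} {M B : Matrix (Fin n) (Fin n) ℂ}
    (hB : IsUnit B) : (Bᴴ * M * B).PosDef ↔ M.PosDef := by
  have hBi : IsUnit B⁻¹ := (Matrix.isUnit_nonsing_inv_iff).2 hB
  constructor
  · intro h
    have h2 := posDef_conj_of hBi h
    have e : (B⁻¹)ᴴ * (Bᴴ * M * B) * B⁻¹ = M := by
      rw [Matrix.conjTranspose_nonsing_inv]
      have h1 : (Bᴴ)⁻¹ * Bᴴ = 1 :=
        Matrix.nonsing_inv_mul _ ((Matrix.isUnit_iff_isUnit_det _).1 ((Matrix.isUnit_conjTranspose _).2 hB))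
      have h2' : B * B⁻¹ = 1 :=
        Matrix.mul_nonsing_inv _ ((Matrix.isUnit_iff_isUnit_det _).1 hB)
      calc (Bᴴ)⁻¹ * (Bᴴ * M * B) * B⁻¹
          = ((Bᴴ)⁻¹ * Bᴴ) * M * (B * B⁻¹) := by noncomm_ring
        _ = M := by rw [h1, h2']; simp
    rwa [e] at h2
  · exact posDef_conj_of hB

lemma posDef_smul_iff {n : ℕ} {M : Matrix (Fin n) (Fin n) ℂ} {c : ℝ} (hc : 0 < c) :
    ((c : ℂ) • M).PosDef ↔ M.PosDef := by
  have key : ∀ (d : ℝ), 0 < d → ∀ N : Matrix (Fin n) (Fin n) ℂ, N.PosDef → ((d : ℂ) • N).PosDef := by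
    intro d hd N hN
    refine Matrix.PosDef.of_dotProduct_mulVec_pos ?_ fun x hx => ?_
    · unfold Matrix.IsHermitian
      rw [Matrix.conjTranspose_smul, hN.1.eq]
      congr 1
      simp
    · rw [Matrix.smul_mulVec, dotProduct_smul]
      have : (0:ℂ) < (d:ℂ) := by exact_mod_cast hd
      calc (0:ℂ) = (d:ℂ) * 0 := by ring
        _ < (d:ℂ) * (star x ⬝ᵥ N *ᵥ x) := by
            exact mul_lt_mul_of_pos_left (hN.dotProduct_mulVec_pos hx) this
  constructor
  · intro h
    have := key c⁻¹ (by positivity) _ h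
    rwa [smul_smul, ← Complex.ofReal_mul, inv_mul_cancel₀ hc.ne', Complex.ofReal_one, one_smul] at this
  · exact key c hc M

lemma real_smul_eq {n : ℕ} (r : ℝ) (M : Matrix (Fin n) (Fin n) ℂ) :
    r • M = (r : ℂ) • M := by
  ext i j; simp [Complex.real_smul]

set_option maxHeartbeats 1000000 in
theorem cayley_Stein_iff_Riccati
    (n : ℕ) (hn : 0 < n) (η : ℝ) (hη : 1 < η)
    (H : Matrix (Fin n) (Fin n) ℂ) (hH : H.IsHermitian)
    (A : Matrix (Fin n) (Fin n) ℂ) (hA : IsUnit (1 + A)) :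
    (((η - 1) • H - (η + 1) • (((1 - A) * (1 + A)⁻¹)ᴴ * H * ((1 - A) * (1 + A)⁻¹))).PosDef)
    ↔ ((Aᴴ * H + H * A - (1 / η) • (Aᴴ * H * A + H)).PosDef) := by
  set B := 1 + A with hBdef
  have hη0 : (0:ℝ) < η := lt_trans one_pos hη
  have hBB : B * B⁻¹ = 1 := Matrix.mul_nonsing_inv _ ((Matrix.isUnit_iff_isUnit_det _).1 hA)
  have hBHi : Bᴴ * (Bᴴ)⁻¹ = 1 :=
    Matrix.mul_nonsing_inv _ ((Matrix.isUnit_iff_isUnit_det _).1 ((Matrix.isUnit_conjTranspose _).2 hA))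
  set S := (η - 1) • H - (η + 1) • (((1 - A) * B⁻¹)ᴴ * H * ((1 - A) * B⁻¹)) with hSdef
  set R := Aᴴ * H + H * A - (1 / η) • (Aᴴ * H * A + H) with hRdef
  have key : Bᴴ * S * B = ((2 * η : ℝ) : ℂ) • R := by
    have e1 : Bᴴ * (((1 - A) * B⁻¹)ᴴ * H * ((1 - A) * B⁻¹)) * B
        = (1 - A)ᴴ * H * (1 - A) := by
      rw [Matrix.conjTranspose_mul, Matrix.conjTranspose_nonsing_inv]
      calc Bᴴ * ((Bᴴ)⁻¹ * (1 - A)ᴴ * H * ((1 - A) * B⁻¹)) * B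
          = (Bᴴ * (Bᴴ)⁻¹) * ((1 - A)ᴴ * H * (1 - A)) * (B⁻¹ * B) := by noncomm_ring
        _ = (1 - A)ᴴ * H * (1 - A) := by
            rw [hBHi, Matrix.nonsing_inv_mul _ ((Matrix.isUnit_iff_isUnit_det _).1 hA)]
            simp
    rw [hSdef, real_smul_eq, real_smul_eq, Matrix.mul_sub, Matrix.sub_mul,
      Matrix.mul_smul, Matrix.smul_mul, Matrix.mul_smul, Matrix.smul_mul, e1,
      hRdef, real_smul_eq]
    have hBH : Bᴴ = 1 + Aᴴ := by rw [hBdef]; simp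
    have h1A : (1 - A)ᴴ = 1 - Aᴴ := by simp
    rw [hBH, h1A, hBdef]
    have hcoef : ((2 * η : ℝ) : ℂ) * ((1 / η : ℝ) : ℂ) = 2 := by
      push_cast
      field_simp
    rw [smul_sub, smul_smul, hcoef]
    have expand1 : (1 + Aᴴ) * H * (1 + A) = H + Aᴴ * H + H * A + Aᴴ * H * A := by noncomm_ring
    have expand2 : (1 - Aᴴ) * H * (1 - A) = H - Aᴴ * H - H * A + Aᴴ * H * A := by noncomm_ring
    rw [expand1, expand2]
    have hc1 : ((η - 1 : ℝ) : ℂ) = (η : ℂ) - 1 := by push_cast; ring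
    have hc2 : ((η + 1 : ℝ) : ℂ) = (η : ℂ) + 1 := by push_cast; ring
    have hc3 : ((2 * η : ℝ) : ℂ) = 2 * (η : ℂ) := by push_cast; ring
    rw [hc1, hc2, hc3]
    module
  have step1 : S.PosDef ↔ (Bᴴ * S * B).PosDef := (posDef_conj_iff hA).symm
  rw [step1, key, posDef_smul_iff (by positivity : (0:ℝ) < 2 * η)]
end

section
/- Let n be a positive integer, let η > 1 be a real number, and let H be an n×n Hermitian positive-definite complex matrix. If A_0 and A_1 belong to L_H(η) and θ ∈ [0,1], then θ·A_1 + (1−θ)·A_0 belongs to L_H(η). (That is, the set L_H(η) is convex.) -/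
open Matrix ComplexOrder

lemma posDef_smul_real {n : ℕ} {M : Matrix (Fin n) (Fin n) ℂ} (hM : M.PosDef)
    {r : ℝ} (hr : 0 < r) : (r • M).PosDef := by
  refine ⟨?_, fun x hx => ?_⟩
  · unfold Matrix.IsHermitian
    rw [conjTranspose_smul, star_trivial, hM.1.eq]
  · exact (hM.smul hr).2 hx

lemma posSemidef_smul_real {n : ℕ} {M : Matrix (Fin n) (Fin n) ℂ} (hM : M.PosSemidef)
    {r : ℝ} (hr : 0 ≤ r) : (r • M).PosSemidef := by
  refine ⟨?_, fun x => ?_⟩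
  · unfold Matrix.IsHermitian
    rw [conjTranspose_smul, star_trivial, hM.1.eq]
  · exact (hM.smul hr).2 x

lemma key_identity {n : ℕ} (η θ : ℝ) (H A₀ A₁ : Matrix (Fin n) (Fin n) ℂ) :
    (θ • A₁ + (1 - θ) • A₀)ᴴ * H + H * (θ • A₁ + (1 - θ) • A₀) -
      (1 / η) • ((θ • A₁ + (1 - θ) • A₀)ᴴ * H * (θ • A₁ + (1 - θ) • A₀) + H) =
    θ • (A₁ᴴ * H + H * A₁ - (1 / η) • (A₁ᴴ * H * A₁ + H)) +
    (1 - θ) • (A₀ᴴ * H + H * A₀ - (1 / η) • (A₀ᴴ * H * A₀ + H)) +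
    ((θ * (1 - θ)) / η) • ((A₁ - A₀)ᴴ * H * (A₁ - A₀)) := by
  simp only [conjTranspose_add, conjTranspose_smul, conjTranspose_sub, star_trivial,
    Matrix.add_mul, Matrix.mul_add, Matrix.sub_mul, Matrix.mul_sub,
    Matrix.smul_mul, Matrix.mul_smul, smul_add, smul_sub, smul_smul]
  module

theorem L_eta_convex
    (n : ℕ) (hn : 0 < n) (η : ℝ) (hη : 1 < η)
    (H : Matrix (Fin n) (Fin n) ℂ) (hH : H.PosDef)
    (A₀ A₁ : Matrix (Fin n) (Fin n) ℂ)
    (hA₀ : (A₀ᴴ * H + H * A₀ - (1 / η) • (A₀ᴴ * H * A₀ + H)).PosDef)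
    (hA₁ : (A₁ᴴ * H + H * A₁ - (1 / η) • (A₁ᴴ * H * A₁ + H)).PosDef)
    (θ : ℝ) (hθ : θ ∈ Set.Icc (0 : ℝ) 1) :
    ((θ • A₁ + (1 - θ) • A₀)ᴴ * H + H * (θ • A₁ + (1 - θ) • A₀) -
      (1 / η) • ((θ • A₁ + (1 - θ) • A₀)ᴴ * H * (θ • A₁ + (1 - θ) • A₀) + H)).PosDef := by
  obtain ⟨hθ0, hθ1⟩ := hθ
  rw [key_identity]
  have hS : (((θ * (1 - θ)) / η) • ((A₁ - A₀)ᴴ * H * (A₁ - A₀))).PosSemidef :=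
    posSemidef_smul_real (hH.posSemidef.conjTranspose_mul_mul_same _)
      (div_nonneg (mul_nonneg hθ0 (by linarith)) (by linarith))
  rcases eq_or_lt_of_le hθ0 with h0 | h0
  · subst h0
    simpa using (posDef_smul_real hA₀ one_pos).add_posSemidef hS
  rcases eq_or_lt_of_le hθ1 with h1 | h1
  · subst h1
    simpa using (posDef_smul_real hA₁ one_pos).add_posSemidef hS
  · exact (((posDef_smul_real hA₁ h0).add (posDef_smul_real hA₀ (by linarith)))).add_posSemidef hS
end

section
/- Let n be a positive integer, let η > 1 be a real number, and let H be an n×n Hermitian positive-definite complex matrix. If A belongs to L_H(η), then A is invertible and A^{-1} also belongs to L_H(η); explicitly, (A^{-1})*H + H·A^{-1} − (1/η)·((A^{-1})*H·A^{-1} + H) is positive definite. (That is, the set L_H(η) is closed under inversion.) -/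
open Matrix ComplexOrder

lemma posdef_conj {n : ℕ} {M B : Matrix (Fin n) (Fin n) ℂ} (hM : M.PosDef) (hB : IsUnit B) :
    (Bᴴ * M * B).PosDef := by
  refine Matrix.PosDef.of_dotProduct_mulVec_pos (Matrix.isHermitian_conjTranspose_mul_mul B hM.1) fun x hx => ?_
  have hBx : B *ᵥ x ≠ 0 := (Matrix.mulVec_injective_iff_isUnit.mpr hB).ne_iff' (by simp) |>.2 hx
  have h := hM.dotProduct_mulVec_pos hBx
  rwa [star_mulVec, ← Matrix.dotProduct_mulVec, Matrix.mulVec_mulVec, Matrix.mulVec_mulVec] at h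

theorem L_eta_closed_under_inversion
    (n : ℕ) (hn : 0 < n) (η : ℝ) (hη : 1 < η)
    (H : Matrix (Fin n) (Fin n) ℂ) (hH : H.PosDef)
    (A : Matrix (Fin n) (Fin n) ℂ)
    (hA : (Aᴴ * H + H * A - (1 / η) • (Aᴴ * H * A + H)).PosDef) :
    IsUnit A ∧
    ((A⁻¹)ᴴ * H + H * A⁻¹ - (1 / η) • ((A⁻¹)ᴴ * H * A⁻¹ + H)).PosDef := by
  have hdet : A.det ≠ 0 := by
    intro h
    obtain ⟨v, hv, hAv⟩ := (Matrix.exists_mulVec_eq_zero_iff).mpr h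
    have h1 := hA.dotProduct_mulVec_pos hv
    have h2 := hH.dotProduct_mulVec_pos hv
    simp only [Matrix.sub_mulVec, Matrix.add_mulVec, Matrix.smul_mulVec,
      ← Matrix.mulVec_mulVec, dotProduct_sub, dotProduct_add,
      dotProduct_smul, Matrix.dotProduct_mulVec (star v) Aᴴ, ← Matrix.star_mulVec,
      hAv, star_zero, zero_dotProduct, Matrix.mulVec_zero, dotProduct_zero,
      add_zero, zero_add, zero_sub] at h1
    have hs : (0:ℂ) < ((1/η : ℝ) : ℂ) := by
      rw [Complex.zero_lt_real]; positivity
    have : (0:ℂ) < (1/η : ℝ) • (star v ⬝ᵥ H *ᵥ v) := by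
      rw [Complex.real_smul]; exact mul_pos hs h2
    exact lt_asymm h1 (by simpa using neg_lt_zero.mpr this)
  have hU : IsUnit A := (Matrix.isUnit_iff_isUnit_det A).mpr hdet.isUnit
  have h1 : A * A⁻¹ = 1 := Matrix.mul_nonsing_inv A hdet.isUnit
  have h2 : (A⁻¹)ᴴ * Aᴴ = 1 := by rw [← conjTranspose_mul, h1, conjTranspose_one]
  refine ⟨hU, ?_⟩
  have e1 : A⁻¹ᴴ * (Aᴴ * H) * A⁻¹ = H * A⁻¹ := by
    rw [← Matrix.mul_assoc, h2, Matrix.one_mul]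
  have e2 : A⁻¹ᴴ * (H * A) * A⁻¹ = A⁻¹ᴴ * H := by
    rw [Matrix.mul_assoc A⁻¹ᴴ (H*A) A⁻¹, Matrix.mul_assoc H A A⁻¹, h1, Matrix.mul_one]
  have e3 : A⁻¹ᴴ * (Aᴴ * H * A) * A⁻¹ = H := by
    rw [Matrix.mul_assoc A⁻¹ᴴ (Aᴴ*H*A) A⁻¹, Matrix.mul_assoc (Aᴴ*H) A A⁻¹, h1,
      Matrix.mul_one, ← Matrix.mul_assoc, h2, Matrix.one_mul]
  have key : (A⁻¹)ᴴ * H + H * A⁻¹ - (1 / η : ℝ) • ((A⁻¹)ᴴ * H * A⁻¹ + H)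
      = (A⁻¹)ᴴ * (Aᴴ * H + H * A - (1 / η : ℝ) • (Aᴴ * H * A + H)) * A⁻¹ := by
    simp only [Matrix.mul_sub, Matrix.sub_mul, Matrix.mul_add, Matrix.add_mul,
      Matrix.mul_smul, Matrix.smul_mul, e1, e2, e3]
    rw [add_comm (H * A⁻¹), add_comm (A⁻¹ᴴ * H * A⁻¹)]
  rw [key]
  exact posdef_conj hA (Matrix.isUnit_nonsing_inv_iff.mpr hU)
end

section
/- Let n be a positive integer and let H be an n×n Hermitian positive-definite complex matrix. Then: (a) every n×n complex matrix A for which HA + A*H is positive definite has all its eigenvalues in the open right half-plane {z ∈ ℂ : Re z > 0}; and (b) for every n×n complex matrix X such that HX + X*H is NOT positive semidefinite, there exist an n×n complex matrix B with HB + B*H positive definite and a real θ ∈ (0,1) such that the matrix θ·X + (1−θ)·B has an eigenvalue whose real part is ≤ 0. (This expresses that the Lyapunov set L_H = {A : HA + A*H positive definite} is a maximal convex set of matrices whose spectrum lies in the open right half-plane.) -/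
open Matrix ComplexOrder

lemma herm_quad_real {n : ℕ} (M : Matrix (Fin n) (Fin n) ℂ) (hM : M.IsHermitian) (x : Fin n → ℂ) :
    star (star x ⬝ᵥ M *ᵥ x) = star x ⬝ᵥ M *ᵥ x := by
  rw [← star_dotProduct, star_mulVec, dotProduct_mulVec, hM.eq]

lemma spectrum_iff_eigen {n : ℕ} (A : Matrix (Fin n) (Fin n) ℂ) (μ : ℂ) :
    μ ∈ spectrum ℂ A ↔ ∃ v, v ≠ 0 ∧ A *ᵥ v = μ • v := by
  rw [spectrum.mem_iff, Algebra.algebraMap_eq_smul_one, Matrix.isUnit_iff_isUnit_det,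
    isUnit_iff_ne_zero, not_not, ← Matrix.exists_mulVec_eq_zero_iff]
  constructor
  · rintro ⟨v, hv, h⟩
    rw [sub_mulVec, smul_mulVec, one_mulVec, sub_eq_zero] at h
    exact ⟨v, hv, h.symm⟩
  · rintro ⟨v, hv, h⟩
    exact ⟨v, hv, by rw [sub_mulVec, smul_mulVec, one_mulVec, h, sub_self]⟩

lemma my_vecMulVec_mulVec {n : ℕ} (u y x : Fin n → ℂ) :
    vecMulVec u y *ᵥ x = (y ⬝ᵥ x) • u := by
  funext i
  simp only [mulVec, vecMulVec_apply, Pi.smul_apply, smul_eq_mul, dotProduct, Finset.sum_mul]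
  exact Finset.sum_congr rfl fun j _ => by ring

theorem L_H_maximal_convex_spectrum_right_half_plane
    (n : ℕ) (hn : 0 < n)
    (H : Matrix (Fin n) (Fin n) ℂ) (hH : H.PosDef) :
    (∀ A : Matrix (Fin n) (Fin n) ℂ, (H * A + Aᴴ * H).PosDef →
      ∀ μ ∈ spectrum ℂ A, 0 < μ.re) ∧
    (∀ X : Matrix (Fin n) (Fin n) ℂ, ¬ (H * X + Xᴴ * H).PosSemidef →
      ∃ B : Matrix (Fin n) (Fin n) ℂ, (H * B + Bᴴ * H).PosDef ∧
        ∃ θ : ℝ, θ ∈ Set.Ioo (0 : ℝ) 1 ∧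
          ∃ μ ∈ spectrum ℂ (θ • X + (1 - θ) • B), μ.re ≤ 0) := by
  constructor
  · -- part (a)
    intro A hA μ hμ
    obtain ⟨v, hv, hAv⟩ := (spectrum_iff_eigen A μ).mp hμ
    have hs := hH.dotProduct_mulVec_pos hv
    set s := star v ⬝ᵥ H *ᵥ v with hs_def
    have hsre : 0 < s.re ∧ s.im = 0 := by
      constructor
      · simpa [Complex.lt_def] using (Complex.lt_def.mp hs).1
      · exact ((Complex.lt_def.mp hs).2).symm
    have hq := hA.dotProduct_mulVec_pos hv
    have hq2 : star v ⬝ᵥ (H * A + Aᴴ * H) *ᵥ v = (μ + star μ) * s := by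
      rw [add_mulVec, dotProduct_add, ← mulVec_mulVec, ← mulVec_mulVec, hAv, mulVec_smul,
        dotProduct_smul, dotProduct_mulVec (star v) Aᴴ, ← star_mulVec, hAv, star_smul,
        smul_dotProduct]
      simp only [smul_eq_mul, hs_def]
      ring
    rw [hq2] at hq
    have h1 : 0 < ((μ + star μ) * s).re := by simpa using (Complex.lt_def.mp hq).1
    rw [Complex.mul_re] at h1
    simp only [Complex.add_re, Complex.add_im, Complex.star_def, Complex.conj_re,
      Complex.conj_im, hsre.2, mul_zero, sub_zero] at h1
    nlinarith [hsre.1]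
  · -- part (b)
    intro X hX
    set M := H * X + Xᴴ * H with hMdef
    have hMh : M.IsHermitian := by
      show Mᴴ = M
      rw [hMdef, conjTranspose_add, conjTranspose_mul, conjTranspose_mul,
        conjTranspose_conjTranspose, hH.1.eq, add_comm]
    obtain ⟨v, hqv⟩ : ∃ v, ¬ (0 ≤ star v ⬝ᵥ M *ᵥ v) := by
      by_contra h
      push_neg at h
      exact hX (posSemidef_iff_dotProduct_mulVec.mpr ⟨hMh, h⟩)
    have hv : v ≠ 0 := by
      rintro rfl
      exact hqv (by simp)
    set q := star v ⬝ᵥ M *ᵥ v with hq_def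
    have hqim : q.im = 0 := by
      have h2 : (starRingEnd ℂ) q = q := herm_quad_real M hMh v
      exact Complex.conj_eq_iff_im.mp h2
    have hqre : q.re < 0 := by
      by_contra h
      push_neg at h
      exact hqv (Complex.le_def.mpr ⟨by simpa using h, by simpa using hqim.symm⟩)
    clear hqv
    have hs := hH.dotProduct_mulVec_pos hv
    set s := star v ⬝ᵥ H *ᵥ v with hs_def
    have hsre : 0 < s.re := by simpa using (Complex.lt_def.mp hs).1
    have hsim : s.im = 0 := ((Complex.lt_def.mp hs).2).symm
    set p := star v ⬝ᵥ (H * X) *ᵥ v with hp_def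
    have hqp : q = p + star p := by
      have h2 : star p = star v ⬝ᵥ (Xᴴ * H) *ᵥ v := by
        rw [hp_def, ← star_dotProduct, star_mulVec, dotProduct_mulVec, conjTranspose_mul, hH.1.eq]
      rw [hq_def, hMdef, add_mulVec, dotProduct_add, h2, hp_def]
    have hpre : p.re < 0 := by
      have hq2 : q.re = 2 * p.re := by
        rw [hqp]
        simp [Complex.add_re, Complex.star_def]
        ring
      linarith
    set β : ℝ := p.im / (2 * s.re) with hβ_def
    set w : Fin n → ℂ := ((4 * (β:ℂ)) * Complex.I) • (H *ᵥ v) - (2:ℂ) • ((H * X) *ᵥ v) with hw_def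
    have hvw : star v ⬝ᵥ w = ((4 * (β:ℂ)) * Complex.I) * s - 2 * p := by
      rw [hw_def, dotProduct_sub, dotProduct_smul, dotProduct_smul, smul_eq_mul, smul_eq_mul,
        ← hs_def, ← hp_def]
    set a := star v ⬝ᵥ w with ha_def
    have haim : a.im = 0 := by
      have h1 : a.im = 4 * β * s.re - 2 * p.im := by
        rw [hvw]
        simp [Complex.mul_im, Complex.mul_re, hsim]
      rw [h1, hβ_def]
      field_simp
      ring
    have hare : a.re = -2 * p.re := by
      rw [hvw]
      simp [Complex.mul_re, Complex.mul_im, hsim]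
    have hapos : 0 < a.re := by linarith
    have ha0 : a ≠ 0 := by
      intro h
      rw [h] at hapos
      simp at hapos
    have hastar : star a = a := Complex.conj_eq_iff_im.mpr haim
    set sv := star v ⬝ᵥ v with hsv_def
    have hsvpos : (0:ℂ) < sv := dotProduct_star_self_pos_iff.mpr hv
    have hsvim : sv.im = 0 := ((Complex.lt_def.mp hsvpos).2).symm
    have hsv0 : sv ≠ 0 := ne_of_gt hsvpos
    have hsvstar : star sv = sv := Complex.conj_eq_iff_im.mpr hsvim
    set N := a⁻¹ • vecMulVec w (star w) + (1 : Matrix (Fin n) (Fin n) ℂ)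
        - sv⁻¹ • vecMulVec v (star v) with hN_def
    have houter : ∀ u : Fin n → ℂ, (vecMulVec u (star u))ᴴ = vecMulVec u (star u) := by
      intro u
      ext i j
      simp [conjTranspose_apply, vecMulVec_apply, mul_comm]
    have hNherm : N.IsHermitian := by
      show Nᴴ = N
      rw [hN_def, conjTranspose_sub, conjTranspose_add, conjTranspose_smul, conjTranspose_smul,
        conjTranspose_one, houter, houter, star_inv₀, star_inv₀, hastar, hsvstar]
    have hwv : star w ⬝ᵥ v = a := by
      rw [star_dotProduct, ← ha_def, hastar]
    have hNv : N *ᵥ v = w := by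
      rw [hN_def, sub_mulVec, add_mulVec, smul_mulVec, smul_mulVec,
        my_vecMulVec_mulVec, my_vecMulVec_mulVec, one_mulVec, hwv, ← hsv_def,
        smul_smul, smul_smul, inv_mul_cancel₀ ha0, inv_mul_cancel₀ hsv0, one_smul, one_smul,
        add_sub_cancel_right]
    have hNpd : N.PosDef := by
      refine Matrix.PosDef.of_dotProduct_mulVec_pos hNherm fun x hx => ?_
      set cv := star v ⬝ᵥ x with hcv_def
      set cw := star w ⬝ᵥ x with hcw_def
      set y := x - (cv / sv) • v with hy_def
      have hxv : star x ⬝ᵥ v = star cv := by rw [star_dotProduct, ← hcv_def]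
      have hxw : star x ⬝ᵥ w = star cw := by rw [star_dotProduct, ← hcw_def]
      have expand : star x ⬝ᵥ N *ᵥ x
          = a⁻¹ * (star cw * cw) + (star x ⬝ᵥ x - sv⁻¹ * (star cv * cv)) := by
        rw [hN_def, sub_mulVec, add_mulVec, smul_mulVec, smul_mulVec,
          my_vecMulVec_mulVec, my_vecMulVec_mulVec, one_mulVec, ← hcw_def, ← hcv_def,
          dotProduct_sub, dotProduct_add, dotProduct_smul, dotProduct_smul,
          dotProduct_smul, dotProduct_smul, hxw, hxv]
        simp only [smul_eq_mul]
        ring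
      have expand2 : star y ⬝ᵥ y = star x ⬝ᵥ x - sv⁻¹ * (star cv * cv) := by
        rw [hy_def, star_sub, star_smul, sub_dotProduct, dotProduct_sub, dotProduct_sub,
          smul_dotProduct, smul_dotProduct, dotProduct_smul, dotProduct_smul, hxv, ← hcv_def,
          ← hsv_def]
        simp only [smul_eq_mul, star_div₀, hsvstar]
        field_simp
        ring
      have hareal : a = ((a.re : ℝ) : ℂ) := by
        apply Complex.ext <;> simp [haim]
      have t2nn : (0:ℂ) ≤ star y ⬝ᵥ y := dotProduct_star_self_nonneg y
      rw [expand, ← expand2]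
      by_cases hy : y = 0
      · have hxcv : x = (cv / sv) • v := by
          rw [hy_def, sub_eq_zero] at hy
          exact hy
        have hcv0 : cv ≠ 0 := by
          intro h
          apply hx
          rw [hxcv, h]
          simp
        have hcw : cw = (cv / sv) * a := by
          rw [hcw_def, hxcv, dotProduct_smul, smul_eq_mul, hwv]
        have hcw0 : cw ≠ 0 := by
          rw [hcw]
          exact mul_ne_zero (div_ne_zero hcv0 hsv0) ha0
        have t1pos : (0:ℂ) < a⁻¹ * (star cw * cw) := by
          rw [hareal, Complex.star_def, ← Complex.ofReal_inv]
          rw [show (starRingEnd ℂ) cw * cw = ((Complex.normSq cw : ℝ) : ℂ) by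
            rw [mul_comm, Complex.mul_conj]]
          rw [← Complex.ofReal_mul]
          rw [show (0:ℂ) = ((0:ℝ):ℂ) by norm_num, Complex.real_lt_real]
          have hnsq : 0 < Complex.normSq cw := Complex.normSq_pos.mpr hcw0
          positivity
        have hyzero : star y ⬝ᵥ y = 0 := by rw [hy]; simp
        rw [hyzero, add_zero]
        exact t1pos
      · have t1nn : (0:ℂ) ≤ a⁻¹ * (star cw * cw) := by
          rw [hareal, Complex.star_def, ← Complex.ofReal_inv]
          rw [show (starRingEnd ℂ) cw * cw = ((Complex.normSq cw : ℝ) : ℂ) by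
            rw [mul_comm, Complex.mul_conj]]
          rw [← Complex.ofReal_mul]
          rw [show (0:ℂ) = ((0:ℝ):ℂ) by norm_num, Complex.real_le_real]
          exact mul_nonneg (inv_nonneg.mpr hapos.le) (Complex.normSq_nonneg cw)
        have t2pos : (0:ℂ) < star y ⬝ᵥ y := dotProduct_star_self_pos_iff.mpr hy
        exact add_pos_of_nonneg_of_pos t1nn t2pos
    have hdet : IsUnit H.det := by
      rw [isUnit_iff_ne_zero]
      intro h
      obtain ⟨u, hu, hu0⟩ := (Matrix.exists_mulVec_eq_zero_iff).mpr h
      have h2 := hH.dotProduct_mulVec_pos hu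
      rw [hu0, dotProduct_zero] at h2
      exact lt_irrefl _ h2
    have hHinv1 : H⁻¹ * H = 1 := Matrix.nonsing_inv_mul H hdet
    have hHinv2 : H * H⁻¹ = 1 := Matrix.mul_nonsing_inv H hdet
    set B := (2:ℂ)⁻¹ • (H⁻¹ * N) with hB_def
    have hBct : Bᴴ = (2:ℂ)⁻¹ • (N * H⁻¹) := by
      rw [hB_def, conjTranspose_smul, conjTranspose_mul, Matrix.conjTranspose_nonsing_inv,
        hH.1.eq, hNherm.eq]
      norm_num
    have hBsum : H * B + Bᴴ * H = N := by
      rw [hB_def, hBct, Matrix.mul_smul, Matrix.smul_mul, ← Matrix.mul_assoc, hHinv2,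
        Matrix.one_mul, Matrix.mul_assoc, hHinv1, Matrix.mul_one, ← add_smul]
      norm_num
    have hBv : B *ᵥ v = ((2 * (β:ℂ)) * Complex.I) • v - X *ᵥ v := by
      rw [hB_def, smul_mulVec, ← mulVec_mulVec, hNv, hw_def, mulVec_sub, mulVec_smul,
        mulVec_smul, mulVec_mulVec, hHinv1, one_mulVec, mulVec_mulVec, ← Matrix.mul_assoc,
        hHinv1, Matrix.one_mul, smul_sub, smul_smul, smul_smul]
      congr 1
      · congr 1
        ring
      · norm_num
    have hrsmul : ∀ (r : ℝ) (u : Fin n → ℂ), r • u = ((r:ℂ)) • u := by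
      intro r u
      funext i
      simp [Complex.real_smul]
    set μ : ℂ := (β:ℂ) * Complex.I with hμ_def
    have hCv : (((1:ℝ)/2) • X + (1 - (1:ℝ)/2) • B) *ᵥ v = μ • v := by
      rw [add_mulVec, smul_mulVec, smul_mulVec, hBv, hrsmul, hrsmul]
      rw [show ((1:ℝ) - 1/2) = (1/2 : ℝ) by norm_num]
      rw [smul_sub, smul_smul]
      rw [show (((1:ℝ)/2 : ℝ) : ℂ) * (2 * (β:ℂ) * Complex.I) = μ by push_cast; rw [hμ_def]; ring]
      module
    have hμmem : μ ∈ spectrum ℂ (((1:ℝ)/2) • X + (1 - (1:ℝ)/2) • B) :=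
      (spectrum_iff_eigen _ μ).mpr ⟨v, hv, hCv⟩
    refine ⟨B, by rw [hBsum]; exact hNpd, 1/2, ⟨by norm_num, by norm_num⟩, μ, hμmem, ?_⟩
    rw [hμ_def]
    simp [Complex.mul_re]
end

section
/- Let n be a positive integer and let η > 1 be a real number. Let k be a positive integer and let υ_1, …, υ_k be n×n complex matrices satisfying Σ_{j=1}^{k} υ_j* υ_j = I_n. If A_1, …, A_k all belong to L_{I_n}(η), then the matrix S = Σ_{j=1}^{k} υ_j* A_j υ_j also belongs to L_{I_n}(η); explicitly, S* + S − (1/η)·(S*S + I_n) is positive definite. (That is, the set L_{I_n}(η) is matrix-convex.) -/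
open Matrix ComplexOrder

private lemma sum_mulVec' {n k : ℕ} (M : Fin k → Matrix (Fin n) (Fin n) ℂ)
    (x : Fin n → ℂ) : (∑ j, M j) *ᵥ x = ∑ j, (M j) *ᵥ x := by
  exact map_sum (Matrix.mulVec.addMonoidHomLeft x) M Finset.univ

private lemma dotProduct_sum' {n k : ℕ} (v : Fin n → ℂ) (w : Fin k → (Fin n → ℂ)) :
    v ⬝ᵥ (∑ j, w j) = ∑ j, v ⬝ᵥ w j := by
  simp only [dotProduct, Finset.sum_apply, Finset.mul_sum]
  exact Finset.sum_comm

private lemma posdef_real_smul {n : ℕ} {M : Matrix (Fin n) (Fin n) ℂ} {r : ℝ}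
    (hr : 0 < r) (hM : M.PosDef) : (r • M).PosDef := by
  refine posDef_iff_dotProduct_mulVec.mpr ⟨?_, fun x hx => ?_⟩
  · have : (r • M)ᴴ = r • Mᴴ := by
      ext i j; simp [Matrix.conjTranspose_apply, Complex.real_smul]
    rw [Matrix.IsHermitian, this, hM.1]
  · have h := hM.dotProduct_mulVec_pos hx
    have : star x ⬝ᵥ (r • M) *ᵥ x = r • (star x ⬝ᵥ M *ᵥ x) := by
      rw [Matrix.smul_mulVec, dotProduct_smul]
    rw [this, Complex.real_smul]
    rw [Complex.lt_def] at h ⊢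
    constructor
    · simp only [Complex.zero_re, Complex.mul_re, Complex.ofReal_re, Complex.ofReal_im,
        zero_mul, sub_zero]
      exact mul_pos hr (by simpa using h.1)
    · simp [Complex.mul_im, ← h.2]

theorem L_I_eta_matrix_convex
    (n : ℕ) (hn : 0 < n) (η : ℝ) (hη : 1 < η)
    (k : ℕ) (hk : 0 < k)
    (υ : Fin k → Matrix (Fin n) (Fin n) ℂ)
    (hiso : ∑ j, (υ j)ᴴ * υ j = 1)
    (A : Fin k → Matrix (Fin n) (Fin n) ℂ)
    (hA : ∀ j, ((A j)ᴴ + A j -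
      (1 / η) • ((A j)ᴴ * A j + 1)).PosDef) :
    ((∑ j, (υ j)ᴴ * A j * υ j)ᴴ + (∑ j, (υ j)ᴴ * A j * υ j) -
      (1 / η) • ((∑ j, (υ j)ᴴ * A j * υ j)ᴴ * (∑ j, (υ j)ᴴ * A j * υ j) + 1)).PosDef := by
  have hη0 : (0:ℝ) < η := lt_trans one_pos hη
  have hηne : η ≠ 0 := ne_of_gt hη0
  set c : ℂ := (η : ℂ) with hc
  set S : Matrix (Fin n) (Fin n) ℂ := ∑ j, (υ j)ᴴ * A j * υ j with hS
  -- real smul = complex smul by coercion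
  have hconv : ∀ (X : Matrix (Fin n) (Fin n) ℂ), (η : ℝ) • X = c • X := by
    intro X; ext i j; simp [Complex.real_smul, hc]
  -- the scaled defect matrices are positive definite
  set P : Fin k → Matrix (Fin n) (Fin n) ℂ :=
    fun j => c • ((A j)ᴴ + A j) - ((A j)ᴴ * A j + 1) with hP
  have hPdef : ∀ j, (P j).PosDef := by
    intro j
    have h1 : (η : ℝ) • ((A j)ᴴ + A j - (1 / η) • ((A j)ᴴ * A j + 1)) = P j := by
      rw [smul_sub, smul_smul, mul_one_div_cancel hηne, one_smul, hconv, hP]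
    rw [← h1]
    exact posdef_real_smul hη0 (hA j)
  -- conjugate transpose of S
  have hSH : Sᴴ = ∑ j, (υ j)ᴴ * (A j)ᴴ * υ j := by
    rw [hS, Matrix.conjTranspose_sum]
    refine Finset.sum_congr rfl fun j _ => ?_
    simp [Matrix.conjTranspose_mul, mul_assoc]
  -- Sum2 : sum of CᴴC
  set C : Fin k → Matrix (Fin n) (Fin n) ℂ := fun j => A j * υ j - υ j * S with hC
  -- key algebraic identity
  have key : (∑ j, (υ j)ᴴ * P j * υ j) + (∑ j, (C j)ᴴ * C j)
      = c • (Sᴴ + S) - (Sᴴ * S + 1) := by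
    have expand1 : ∀ j, (υ j)ᴴ * P j * υ j
        = c • ((υ j)ᴴ * (A j)ᴴ * υ j) + c • ((υ j)ᴴ * A j * υ j)
          - (υ j)ᴴ * (A j)ᴴ * A j * υ j - (υ j)ᴴ * υ j := by
      intro j
      simp only [hP, mul_sub, sub_mul, mul_add, add_mul, mul_smul_comm, smul_mul_assoc,
        smul_add, mul_one, one_mul, mul_assoc]
      abel
    have expand2 : ∀ j, (C j)ᴴ * C j
        = (υ j)ᴴ * (A j)ᴴ * A j * υ j - (υ j)ᴴ * (A j)ᴴ * υ j * S
          - Sᴴ * ((υ j)ᴴ * A j * υ j) + Sᴴ * ((υ j)ᴴ * υ j) * S := by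
      intro j
      simp only [hC, Matrix.conjTranspose_sub, Matrix.conjTranspose_mul, sub_mul, mul_sub,
        mul_assoc]
      abel
    have h1 : ∑ j, (υ j)ᴴ * (A j)ᴴ * υ j * S = Sᴴ * S := by
      rw [← Finset.sum_mul, ← hSH]
    have h2 : ∑ j, Sᴴ * ((υ j)ᴴ * A j * υ j) = Sᴴ * S := by
      rw [← Finset.mul_sum, ← hS]
    have h3 : ∑ j, Sᴴ * ((υ j)ᴴ * υ j) * S = Sᴴ * S := by
      rw [← Finset.sum_mul, ← Finset.mul_sum, hiso, mul_one]
    have e1 : ∑ j, (υ j)ᴴ * P j * υ j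
        = c • Sᴴ + c • S - (∑ j, (υ j)ᴴ * (A j)ᴴ * A j * υ j) - 1 := by
      rw [Finset.sum_congr rfl fun j _ => expand1 j]
      rw [Finset.sum_sub_distrib, Finset.sum_sub_distrib, Finset.sum_add_distrib,
        ← Finset.smul_sum, ← Finset.smul_sum, ← hSH, ← hS, hiso]
    have e2 : ∑ j, (C j)ᴴ * C j
        = (∑ j, (υ j)ᴴ * (A j)ᴴ * A j * υ j) - Sᴴ * S := by
      rw [Finset.sum_congr rfl fun j _ => expand2 j]
      rw [Finset.sum_add_distrib, Finset.sum_sub_distrib, Finset.sum_sub_distrib,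
        h1, h2, h3]
      abel
    rw [e1, e2, smul_add]
    abel
  -- positive definiteness of the first sum
  have hsum1 : (∑ j, (υ j)ᴴ * P j * υ j).PosDef := by
    refine posDef_iff_dotProduct_mulVec.mpr ⟨?_, fun x hx => ?_⟩
    · rw [Matrix.IsHermitian, Matrix.conjTranspose_sum]
      refine Finset.sum_congr rfl fun j _ => ?_
      exact Matrix.isHermitian_conjTranspose_mul_mul (υ j) (hPdef j).1
    · have hquad : ∀ j, star x ⬝ᵥ ((υ j)ᴴ * P j * υ j) *ᵥ x
          = star (υ j *ᵥ x) ⬝ᵥ (P j) *ᵥ (υ j *ᵥ x) := by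
        intro j
        simp only [star_mulVec, dotProduct_mulVec, vecMul_vecMul]
      have hex : ∃ j, υ j *ᵥ x ≠ 0 := by
        by_contra hall
        push_neg at hall
        apply hx
        have : star x ⬝ᵥ x = 0 := by
          have h0 : star x ⬝ᵥ (∑ j, (υ j)ᴴ * υ j) *ᵥ x = star x ⬝ᵥ x := by
            rw [hiso, Matrix.one_mulVec]
          rw [sum_mulVec', dotProduct_sum'] at h0
          rw [← h0]
          refine Finset.sum_eq_zero fun j _ => ?_
          have : ((υ j)ᴴ * υ j) *ᵥ x = (υ j)ᴴ *ᵥ (υ j *ᵥ x) := by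
            rw [← Matrix.mulVec_mulVec]
          rw [this, hall j, Matrix.mulVec_zero, dotProduct_zero]
        exact dotProduct_star_self_eq_zero.mp this
      obtain ⟨j0, hj0⟩ := hex
      rw [sum_mulVec', dotProduct_sum']
      refine Finset.sum_pos' (fun j _ => ?_) ⟨j0, Finset.mem_univ j0, ?_⟩
      · rw [hquad j]
        exact (hPdef j).posSemidef.dotProduct_mulVec_nonneg (υ j *ᵥ x)
      · rw [hquad j0]
        exact (hPdef j0).dotProduct_mulVec_pos hj0
  -- positive semidefiniteness of the second sum
  have hsum2 : (∑ j, (C j)ᴴ * C j).PosSemidef := by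
    refine posSemidef_iff_dotProduct_mulVec.mpr ⟨?_, fun x => ?_⟩
    · rw [Matrix.IsHermitian, Matrix.conjTranspose_sum]
      refine Finset.sum_congr rfl fun j _ => ?_
      exact (Matrix.posSemidef_conjTranspose_mul_self (C j)).1
    · rw [sum_mulVec', dotProduct_sum']
      exact Finset.sum_nonneg fun j _ =>
        (Matrix.posSemidef_conjTranspose_mul_self (C j)).dotProduct_mulVec_nonneg x
  -- assemble
  have hbig : (c • (Sᴴ + S) - (Sᴴ * S + 1)).PosDef := by
    rw [← key]; exact hsum1.add_posSemidef hsum2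
  have hid : (η : ℝ) • (Sᴴ + S - (1 / η) • (Sᴴ * S + 1)) = c • (Sᴴ + S) - (Sᴴ * S + 1) := by
    rw [smul_sub, smul_smul, mul_one_div_cancel hηne, one_smul, hconv]
  have hfin : ((η : ℝ)⁻¹ • ((η : ℝ) • (Sᴴ + S - (1 / η) • (Sᴴ * S + 1)))).PosDef := by
    rw [hid]
    exact posdef_real_smul (inv_pos.mpr hη0) hbig
  rwa [smul_smul, inv_mul_cancel₀ hηne, one_smul] at hfin
end

section
/- Let m be a positive integer and let η > 1 be a real number. (a) (Inversion) If F : ℂ → (m×m complex matrices) satisfies, for every s with Re s > 0, that F(s)* + F(s) − (1/η)·(F(s)*F(s) + I_m) is positive definite, then for every such s the matrix F(s) is invertible and (F(s)^{-1})* + F(s)^{-1} − (1/η)·((F(s)^{-1})*F(s)^{-1} + I_m) is positive definite, with the same η. (b) (Matrix-convexity) If υ_1, …, υ_k are m×m complex matrices with Σ_j υ_j*υ_j = I_m and F_1, …, F_k are functions each satisfying the displayed positive-definiteness condition for all Re s > 0, then the function s ↦ Σ_j υ_j* F_j(s) υ_j also satisfies it for all Re s > 0. -/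
open Matrix ComplexOrder Finset

namespace HPetaAux

variable {m : ℕ}

noncomputable def nsq {m : ℕ} (v : Fin m → ℂ) : ℝ := ∑ i, Complex.normSq (v i)

lemma nsq_nonneg (v : Fin m → ℂ) : 0 ≤ nsq v :=
  Finset.sum_nonneg fun _ _ => Complex.normSq_nonneg _

lemma nsq_zero : nsq (0 : Fin m → ℂ) = 0 := by simp [nsq]

lemma nsq_eq_zero {v : Fin m → ℂ} (h : nsq v = 0) : v = 0 := by
  funext i
  have := (Finset.sum_eq_zero_iff_of_nonneg
    (fun i _ => Complex.normSq_nonneg (v i))).mp h i (Finset.mem_univ i)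
  simpa [Complex.normSq_eq_zero] using this

lemma nsq_pos {v : Fin m → ℂ} (hv : v ≠ 0) : 0 < nsq v :=
  lt_of_le_of_ne (nsq_nonneg v) (fun h => hv (nsq_eq_zero h.symm))

lemma star_dot_self (v : Fin m → ℂ) : star v ⬝ᵥ v = (nsq v : ℂ) := by
  simp only [dotProduct, nsq, Pi.star_apply, Complex.ofReal_sum]
  exact Finset.sum_congr rfl fun i _ => by
    rw [Complex.star_def]; exact Complex.normSq_eq_conj_mul_self.symm

lemma star_dot_comm (u v : Fin m → ℂ) : star u ⬝ᵥ v = star (star v ⬝ᵥ u) := by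
  simp only [dotProduct, star_sum, star_mul', star_star, Pi.star_apply]
  exact Finset.sum_congr rfl fun i _ => mul_comm _ _

lemma re_star_dot_comm (u v : Fin m → ℂ) : (star u ⬝ᵥ v).re = (star v ⬝ᵥ u).re := by
  rw [star_dot_comm]; simp [Complex.star_def]

lemma dot_conjTranspose_mulVec (M : Matrix (Fin m) (Fin m) ℂ) (x w : Fin m → ℂ) :
    star x ⬝ᵥ (Mᴴ *ᵥ w) = star (M *ᵥ x) ⬝ᵥ w := by
  rw [dotProduct_mulVec, star_mulVec]

lemma re_dot_le (u v : Fin m → ℂ) :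
    (star u ⬝ᵥ v).re ≤ Real.sqrt (nsq u) * Real.sqrt (nsq v) := by
  have h1 : (star u ⬝ᵥ v).re = ∑ i, ((starRingEnd ℂ) (u i) * v i).re := by
    simp [dotProduct, Complex.re_sum]
  have h2 : ∀ i : Fin m, ((starRingEnd ℂ) (u i) * v i).re ≤
      ‖u i‖ * ‖v i‖ := by
    intro i
    calc ((starRingEnd ℂ) (u i) * v i).re ≤ ‖(starRingEnd ℂ) (u i) * v i‖ :=
          Complex.re_le_norm _
      _ = ‖u i‖ * ‖v i‖ := by
          rw [norm_mul, Complex.norm_conj]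
  calc (star u ⬝ᵥ v).re ≤ ∑ i, ‖u i‖ * ‖v i‖ := by
        rw [h1]; exact Finset.sum_le_sum fun i _ => h2 i
    _ ≤ Real.sqrt (∑ i, ‖u i‖ ^ 2) * Real.sqrt (∑ i, ‖v i‖ ^ 2) :=
        Real.sum_mul_le_sqrt_mul_sqrt _ _ _
    _ = Real.sqrt (nsq u) * Real.sqrt (nsq v) := by
        simp [nsq, Complex.sq_norm]

lemma sum_mulVec {k : ℕ} (M : Fin k → Matrix (Fin m) (Fin m) ℂ) (x : Fin m → ℂ) :
    (∑ j, M j) *ᵥ x = ∑ j, M j *ᵥ x := by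
  ext i
  simp only [Matrix.mulVec, dotProduct, Finset.sum_apply, Matrix.sum_apply, Finset.sum_mul]
  rw [Finset.sum_comm]

lemma dot_sum {k : ℕ} (v : Fin m → ℂ) (f : Fin k → Fin m → ℂ) :
    v ⬝ᵥ (∑ j, f j) = ∑ j, v ⬝ᵥ f j := by
  simp only [dotProduct, Finset.sum_apply, Finset.mul_sum]
  rw [Finset.sum_comm]

/-- The key scalar reformulation of the HP condition. -/
lemma good_iff (η : ℝ) (hη : 0 < η) (A : Matrix (Fin m) (Fin m) ℂ) :
    (Aᴴ + A - (1 / η) • (Aᴴ * A + 1)).PosDef ↔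
      ∀ x : Fin m → ℂ, x ≠ 0 →
        nsq (A *ᵥ x) + nsq x < 2 * η * (star x ⬝ᵥ (A *ᵥ x)).re := by
  have herm : (Aᴴ + A - (1 / η) • (Aᴴ * A + 1)).IsHermitian := by
    have hX : (Aᴴ * A + 1 : Matrix (Fin m) (Fin m) ℂ).IsHermitian := by
      refine Matrix.IsHermitian.add ?_ Matrix.isHermitian_one
      simpa using Matrix.isHermitian_mul_conjTranspose_self Aᴴ
    refine Matrix.IsHermitian.sub (Matrix.isHermitian_transpose_add_self A) ?_
    unfold Matrix.IsHermitian
    rw [Matrix.conjTranspose_smul, star_trivial, hX.eq]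
  have key : ∀ x : Fin m → ℂ,
      star x ⬝ᵥ ((Aᴴ + A - (1 / η) • (Aᴴ * A + 1)) *ᵥ x)
        = ((2 * (star x ⬝ᵥ (A *ᵥ x)).re - (1 / η) * (nsq (A *ᵥ x) + nsq x) : ℝ) : ℂ) := by
    intro x
    rw [Matrix.sub_mulVec, Matrix.add_mulVec, Matrix.smul_mulVec, Matrix.add_mulVec,
      Matrix.one_mulVec, ← Matrix.mulVec_mulVec, dotProduct_sub, dotProduct_add,
      dotProduct_smul, dotProduct_add]
    rw [dot_conjTranspose_mulVec, dot_conjTranspose_mulVec, star_dot_self, star_dot_self,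
      star_dot_comm (A *ᵥ x) x]
    set c := star x ⬝ᵥ (A *ᵥ x) with hc
    rw [Complex.star_def]
    have : (starRingEnd ℂ) c + c = ((2 * c.re : ℝ) : ℂ) := by
      rw [add_comm]; exact Complex.add_conj c
    rw [this, Complex.real_smul]
    push_cast
    ring
  constructor
  · intro hPD x hx
    have h0 := hPD.dotProduct_mulVec_pos hx
    rw [key x, Complex.zero_lt_real] at h0
    set c := (star x ⬝ᵥ (A *ᵥ x)).re
    set S := nsq (A *ᵥ x) + nsq x
    have h2 : 0 < η * (2 * c - 1 / η * S) := mul_pos hη h0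
    have h3 : η * (2 * c - 1 / η * S) = 2 * η * c - S := by
      field_simp
    linarith [h3 ▸ h2]
  · intro h
    refine Matrix.posDef_iff_dotProduct_mulVec.mpr ⟨herm, fun x hx => ?_⟩
    rw [key x, Complex.zero_lt_real]
    have h0 := h x hx
    set c := (star x ⬝ᵥ (A *ᵥ x)).re
    set S := nsq (A *ᵥ x) + nsq x
    have h3 : η * (2 * c - 1 / η * S) = 2 * η * c - S := by
      field_simp
    have h4 : 0 < η * (2 * c - 1 / η * S) := by rw [h3]; linarith
    have h5 := div_pos h4 hη
    rwa [mul_div_cancel_left₀ _ (ne_of_gt hη)] at h5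
  
lemma sum_nsq {k : ℕ} {υ : Fin k → Matrix (Fin m) (Fin m) ℂ}
    (hsum : ∑ j, (υ j)ᴴ * υ j = 1) (v : Fin m → ℂ) :
    ∑ j, nsq (υ j *ᵥ v) = nsq v := by
  have h := congrArg (fun M : Matrix (Fin m) (Fin m) ℂ => star v ⬝ᵥ (M *ᵥ v)) hsum
  simp only [Matrix.one_mulVec] at h
  rw [sum_mulVec, dot_sum, star_dot_self] at h
  have h2 : ∀ j : Fin k, star v ⬝ᵥ (((υ j)ᴴ * υ j) *ᵥ v) = ((nsq (υ j *ᵥ v) : ℝ) : ℂ) := by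
    intro j
    rw [← Matrix.mulVec_mulVec, dot_conjTranspose_mulVec, star_dot_self]
  rw [Finset.sum_congr rfl fun j _ => h2 j, ← Complex.ofReal_sum] at h
  exact_mod_cast h

end HPetaAux

open HPetaAux in
theorem HP_eta_inversion_and_matrix_convexity
    (m : ℕ) (hm : 0 < m) (η : ℝ) (hη : 1 < η) :
    (∀ F : ℂ → Matrix (Fin m) (Fin m) ℂ,
      (∀ s : ℂ, 0 < s.re →
        ((F s)ᴴ + F s - (1 / η) • ((F s)ᴴ * F s + 1)).PosDef) →
      ∀ s : ℂ, 0 < s.re →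
        IsUnit (F s) ∧
        (((F s)⁻¹)ᴴ + (F s)⁻¹ - (1 / η) • (((F s)⁻¹)ᴴ * (F s)⁻¹ + 1)).PosDef) ∧
    (∀ k : ℕ, ∀ υ : Fin k → Matrix (Fin m) (Fin m) ℂ,
      (∑ j, (υ j)ᴴ * υ j = 1) →
      ∀ F : Fin k → ℂ → Matrix (Fin m) (Fin m) ℂ,
      (∀ j, ∀ s : ℂ, 0 < s.re →
        ((F j s)ᴴ + F j s - (1 / η) • ((F j s)ᴴ * F j s + 1)).PosDef) →
      ∀ s : ℂ, 0 < s.re →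
        ((∑ j, (υ j)ᴴ * F j s * υ j)ᴴ + (∑ j, (υ j)ᴴ * F j s * υ j) -
          (1 / η) • ((∑ j, (υ j)ᴴ * F j s * υ j)ᴴ * (∑ j, (υ j)ᴴ * F j s * υ j) + 1)).PosDef) := by
  have hη0 : (0 : ℝ) < η := by linarith
  constructor
  · -- Inversion
    intro F hF s hs
    have hQ := (good_iff η hη0 (F s)).mp (hF s hs)
    have hinj : Function.Injective (F s).mulVec := by
      intro a b hab
      by_contra hne
      have hz : a - b ≠ 0 := sub_ne_zero.mpr hne
      have h0 : F s *ᵥ (a - b) = 0 := by rw [Matrix.mulVec_sub, hab, sub_self]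
      have h1 := hQ (a - b) hz
      rw [h0] at h1
      simp only [nsq_zero, dotProduct_zero, Complex.zero_re, mul_zero, zero_add] at h1
      exact absurd h1 (not_lt.mpr (nsq_nonneg _))
    have hu : IsUnit (F s) := Matrix.mulVec_injective_iff_isUnit.mp hinj
    refine ⟨hu, ?_⟩
    rw [good_iff η hη0]
    intro x hx
    have hAB : F s * (F s)⁻¹ = 1 :=
      Matrix.mul_nonsing_inv _ ((Matrix.isUnit_iff_isUnit_det _).mp hu)
    set y := (F s)⁻¹ *ᵥ x with hy
    have hxy : F s *ᵥ y = x := by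
      rw [hy, Matrix.mulVec_mulVec, hAB, Matrix.one_mulVec]
    have hy0 : y ≠ 0 := by
      intro h
      rw [h, Matrix.mulVec_zero] at hxy
      exact hx hxy.symm
    have h1 := hQ y hy0
    rw [hxy] at h1
    have h2 : (star x ⬝ᵥ y).re = (star y ⬝ᵥ x).re := re_star_dot_comm x y
    rw [h2]
    linarith
  · -- Matrix convexity
    intro k υ hsum F hF s hs
    rw [good_iff η hη0]
    intro x hx
    set G := ∑ j, (υ j)ᴴ * F j s * υ j with hG
    set w := fun j => F j s *ᵥ (υ j *ᵥ x) with hw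
    have hGx : G *ᵥ x = ∑ j, (υ j)ᴴ *ᵥ w j := by
      rw [hG, sum_mulVec]
      exact Finset.sum_congr rfl fun j _ => by
        rw [hw, Matrix.mulVec_mulVec, Matrix.mulVec_mulVec, Matrix.mul_assoc]
    have h2 : (star x ⬝ᵥ (G *ᵥ x)).re = ∑ j, (star (υ j *ᵥ x) ⬝ᵥ w j).re := by
      rw [hGx, dot_sum, Complex.re_sum]
      exact Finset.sum_congr rfl fun j _ => by rw [dot_conjTranspose_mulVec]
    have h3x : ∑ j, nsq (υ j *ᵥ x) = nsq x := sum_nsq hsum x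
    have hexists : ∃ j : Fin k, υ j *ᵥ x ≠ 0 := by
      by_contra h
      push_neg at h
      have h0 : ∑ j, nsq (υ j *ᵥ x) = 0 :=
        Finset.sum_eq_zero fun j _ => by rw [h j, nsq_zero]
      rw [h3x] at h0
      exact (nsq_pos hx).ne' h0
    have h4 : ∀ j : Fin k, nsq (w j) + nsq (υ j *ᵥ x) ≤
        2 * η * (star (υ j *ᵥ x) ⬝ᵥ w j).re := by
      intro j
      by_cases hj : υ j *ᵥ x = 0
      · have hwj : w j = 0 := by rw [hw]; simp [hj]
        rw [hwj, hj, nsq_zero, dotProduct_zero]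
        simp
      · exact le_of_lt ((good_iff η hη0 (F j s)).mp (hF j s hs) _ hj)
    obtain ⟨j₀, hj₀⟩ := hexists
    have h4s : ∑ j, (nsq (w j) + nsq (υ j *ᵥ x)) <
        ∑ j, 2 * η * (star (υ j *ᵥ x) ⬝ᵥ w j).re := by
      refine Finset.sum_lt_sum (fun j _ => h4 j) ⟨j₀, Finset.mem_univ _, ?_⟩
      exact (good_iff η hη0 (F j₀ s)).mp (hF j₀ s hs) _ hj₀
    have h4' : (∑ j, nsq (w j)) + nsq x < 2 * η * (star x ⬝ᵥ (G *ᵥ x)).re := by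
      rw [Finset.sum_add_distrib, h3x] at h4s
      rw [h2, Finset.mul_sum]
      exact h4s
    -- Now nsq (G *ᵥ x) ≤ ∑ j, nsq (w j)
    have h3g : ∑ j, nsq (υ j *ᵥ (G *ᵥ x)) = nsq (G *ᵥ x) := sum_nsq hsum (G *ᵥ x)
    have h5 : nsq (G *ᵥ x) ≤ ∑ j, nsq (w j) := by
      have hre : nsq (G *ᵥ x) = (star (G *ᵥ x) ⬝ᵥ (G *ᵥ x)).re := by
        rw [star_dot_self]; simp
      have hsplit : (star (G *ᵥ x) ⬝ᵥ (G *ᵥ x)).re =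
          ∑ j, (star (υ j *ᵥ (G *ᵥ x)) ⬝ᵥ w j).re := by
        nth_rewrite 2 [hGx]
        rw [dot_sum, Complex.re_sum]
        exact Finset.sum_congr rfl fun j _ => by rw [dot_conjTranspose_mulVec]
      have hCS : ∑ j, (star (υ j *ᵥ (G *ᵥ x)) ⬝ᵥ w j).re ≤
          Real.sqrt (∑ j, nsq (υ j *ᵥ (G *ᵥ x))) * Real.sqrt (∑ j, nsq (w j)) := by
        calc ∑ j, (star (υ j *ᵥ (G *ᵥ x)) ⬝ᵥ w j).re
            ≤ ∑ j, Real.sqrt (nsq (υ j *ᵥ (G *ᵥ x))) * Real.sqrt (nsq (w j)) :=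
              Finset.sum_le_sum fun j _ => re_dot_le _ _
          _ ≤ _ := Real.sum_sqrt_mul_sqrt_le _ (fun j => nsq_nonneg _) (fun j => nsq_nonneg _)
      have hkey : nsq (G *ᵥ x) ≤ Real.sqrt (nsq (G *ᵥ x)) * Real.sqrt (∑ j, nsq (w j)) := by
        rw [h3g] at hCS
        calc nsq (G *ᵥ x) = (star (G *ᵥ x) ⬝ᵥ (G *ᵥ x)).re := hre
          _ = ∑ j, (star (υ j *ᵥ (G *ᵥ x)) ⬝ᵥ w j).re := hsplit
          _ ≤ _ := hCS
      nlinarith [Real.sq_sqrt (nsq_nonneg (G *ᵥ x)),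
        Real.sq_sqrt (Finset.sum_nonneg fun j (_ : j ∈ Finset.univ) => nsq_nonneg (w j)),
        Real.sqrt_nonneg (nsq (G *ᵥ x)),
        Real.sqrt_nonneg (∑ j, nsq (w j))]
    linarith
end

section
/- Let n, m be positive integers, let A be an n×n, B an n×m, C an m×n and D an m×m complex matrix, and let H be an n×n Hermitian positive-definite matrix. Suppose the (n+m)×(n+m) block matrix Q = [[−HA − A*H, C* − HB], [C − B*H, D + D*]] is positive semidefinite. Then for every s ∈ ℂ with Re s > 0, the matrix s·I_n − A is invertible and, with F(s) = C(s·I_n − A)^{-1}B + D, the matrix F(s) + F(s)* is positive semidefinite. (This is the sufficiency direction of the Kalman–Yakubovich–Popov lemma for positive real functions.) -/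
open Matrix ComplexOrder

private lemma stardot {k l : Type*} [Fintype k] [Fintype l]
    (M : Matrix k l ℂ) (x : l → ℂ) (y : k → ℂ) :
    star x ⬝ᵥ (Mᴴ *ᵥ y) = star (star y ⬝ᵥ (M *ᵥ x)) := by
  rw [Matrix.star_dotProduct, Matrix.star_mulVec, Matrix.conjTranspose_conjTranspose,
    ← Matrix.dotProduct_mulVec]

private lemma star_elim {k l : Type*} (x : k → ℂ) (u : l → ℂ) :
    star (Sum.elim x u) = Sum.elim (star x) (star u) := by
  funext i; cases i <;> rfl

theorem kyp_positive_real_sufficiency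
    (n m : ℕ) (hn : 0 < n) (hm : 0 < m)
    (A : Matrix (Fin n) (Fin n) ℂ) (B : Matrix (Fin n) (Fin m) ℂ)
    (C : Matrix (Fin m) (Fin n) ℂ) (D : Matrix (Fin m) (Fin m) ℂ)
    (H : Matrix (Fin n) (Fin n) ℂ) (hH : H.PosDef)
    (hQ : (Matrix.fromBlocks (-(H * A) - Aᴴ * H) (Cᴴ - H * B)
      (C - Bᴴ * H) (D + Dᴴ)).PosSemidef) :
    ∀ s : ℂ, 0 < s.re →
      IsUnit (s • (1 : Matrix (Fin n) (Fin n) ℂ) - A) ∧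
      ((C * (s • (1 : Matrix (Fin n) (Fin n) ℂ) - A)⁻¹ * B + D) +
        (C * (s • (1 : Matrix (Fin n) (Fin n) ℂ) - A)⁻¹ * B + D)ᴴ).PosSemidef := by
  intro s hs
  set S : Matrix (Fin n) (Fin n) ℂ := s • (1 : Matrix (Fin n) (Fin n) ℂ) - A with hSdef
  have hr : (0:ℂ) < s + star s := by
    have : s + star s = ((2 * s.re : ℝ) : ℂ) := Complex.add_conj s
    rw [this]
    rw [Complex.zero_lt_real]
    linarith
  -- top-left block PSD
  have hQ11 : (-(H * A) - Aᴴ * H).PosSemidef := by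
    have h1 := hQ.submatrix (Sum.inl : Fin n → Fin n ⊕ Fin m)
    have h2 : (Matrix.fromBlocks (-(H * A) - Aᴴ * H) (Cᴴ - H * B)
        (C - Bᴴ * H) (D + Dᴴ)).submatrix (Sum.inl : Fin n → Fin n ⊕ Fin m) Sum.inl
        = -(H * A) - Aᴴ * H := by
      ext i j; rfl
    rwa [h2] at h1
  -- invertibility
  have hdet : IsUnit S.det := by
    rw [isUnit_iff_ne_zero]
    intro hdet0
    obtain ⟨x, hx0, hxk⟩ := Matrix.exists_mulVec_eq_zero_iff.mpr hdet0
    have hAx : A *ᵥ x = s • x := by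
      rw [hSdef, Matrix.sub_mulVec, Matrix.smul_mulVec, Matrix.one_mulVec] at hxk
      have := sub_eq_zero.mp hxk
      exact this.symm
    set h : ℂ := star x ⬝ᵥ H *ᵥ x with hhdef
    have hh : 0 < h := (Matrix.posDef_iff_dotProduct_mulVec.mp hH).2 hx0
    have e1 : star x ⬝ᵥ (H * A) *ᵥ x = s * h := by
      rw [← Matrix.mulVec_mulVec, hAx, Matrix.mulVec_smul, dotProduct_smul, smul_eq_mul, hhdef]
    have e2 : star x ⬝ᵥ (Aᴴ * H) *ᵥ x = star s * h := by
      rw [← Matrix.mulVec_mulVec, stardot, hAx, dotProduct_smul, smul_eq_mul,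
        Matrix.star_dotProduct, star_mul', star_star, hhdef]
    have hq := hQ11.dotProduct_mulVec_nonneg x
    rw [Matrix.sub_mulVec, Matrix.neg_mulVec, dotProduct_sub, dotProduct_neg, e1, e2] at hq
    have hpos : (0:ℂ) < (s + star s) * h := mul_pos hr hh
    have : (s + star s) * h ≤ 0 := by
      have heq : -(s * h) - star s * h = -((s + star s) * h) := by ring
      rw [heq] at hq
      exact neg_nonneg.mp hq
    exact absurd (lt_of_lt_of_le hpos this) (lt_irrefl 0)
  refine ⟨(Matrix.isUnit_iff_isUnit_det S).mpr hdet, ?_⟩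
  refine Matrix.PosSemidef.of_dotProduct_mulVec_nonneg (Matrix.isHermitian_add_transpose_self _) ?_
  intro u
  set x : Fin n → ℂ := S⁻¹ *ᵥ (B *ᵥ u) with hxdef
  have hSx : S *ᵥ x = B *ᵥ u := by
    rw [hxdef, Matrix.mulVec_mulVec, Matrix.mul_nonsing_inv _ hdet, Matrix.one_mulVec]
  have hAx : A *ᵥ x = s • x - B *ᵥ u := by
    rw [← hSx, hSdef, Matrix.sub_mulVec, Matrix.smul_mulVec, Matrix.one_mulVec]
    abel
  set h : ℂ := star x ⬝ᵥ H *ᵥ x with hhdef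
  set p : ℂ := star x ⬝ᵥ H *ᵥ (B *ᵥ u) with hpdef
  set q : ℂ := star u ⬝ᵥ C *ᵥ x with hqdef
  set d : ℂ := star u ⬝ᵥ D *ᵥ u with hddef
  have hBHx : star (B *ᵥ u) ⬝ᵥ H *ᵥ x = star p := by
    conv_lhs => rw [← hH.1]
    rw [stardot, hpdef]
  have hHxBu : star (H *ᵥ x) ⬝ᵥ (B *ᵥ u) = p := by
    rw [Matrix.star_dotProduct, hBHx, star_star]
  have eh1 : star x ⬝ᵥ (H * A) *ᵥ x = s * h - p := by
    rw [← Matrix.mulVec_mulVec, hAx, Matrix.mulVec_sub, Matrix.mulVec_smul,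
      dotProduct_sub, dotProduct_smul, smul_eq_mul, hhdef, hpdef]
  have eh2 : star x ⬝ᵥ (Aᴴ * H) *ᵥ x = star s * h - star p := by
    rw [← Matrix.mulVec_mulVec, stardot, hAx, dotProduct_sub, dotProduct_smul, smul_eq_mul,
      hHxBu, Matrix.star_dotProduct (H *ᵥ x) x]
    rw [star_sub, star_mul', star_star, hhdef]
  have ec : star x ⬝ᵥ Cᴴ *ᵥ u = star q := by rw [stardot, hqdef]
  have eb : star u ⬝ᵥ (Bᴴ * H) *ᵥ x = star p := by
    rw [← Matrix.mulVec_mulVec, stardot, hHxBu]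
  have ed : star u ⬝ᵥ Dᴴ *ᵥ u = star d := by rw [stardot, hddef]
  have ehb : star x ⬝ᵥ (H * B) *ᵥ u = p := by
    rw [← Matrix.mulVec_mulVec, hpdef]
  have hQF : star (Sum.elim x u) ⬝ᵥ ((Matrix.fromBlocks (-(H * A) - Aᴴ * H) (Cᴴ - H * B)
      (C - Bᴴ * H) (D + Dᴴ)) *ᵥ (Sum.elim x u))
      = q + star q + d + star d - (s + star s) * h := by
    rw [star_elim, Matrix.fromBlocks_mulVec, sumElim_dotProduct_sumElim]
    simp only [Sum.elim_comp_inl, Sum.elim_comp_inr, Matrix.sub_mulVec, Matrix.add_mulVec,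
      Matrix.neg_mulVec, dotProduct_add, dotProduct_sub, dotProduct_neg]
    rw [eh1, eh2, ec, ehb, eb, ed]
    rw [hqdef, hddef]
    ring
  have hv := hQ.dotProduct_mulVec_nonneg (Sum.elim x u)
  rw [hQF] at hv
  have eF : star u ⬝ᵥ (C * S⁻¹ * B + D) *ᵥ u = q + d := by
    rw [Matrix.add_mulVec, dotProduct_add, ← Matrix.mulVec_mulVec, ← Matrix.mulVec_mulVec,
      ← hxdef, hqdef, hddef]
  have eFH : star u ⬝ᵥ (C * S⁻¹ * B + D)ᴴ *ᵥ u = star q + star d := by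
    rw [stardot, eF, star_add]
  have hgoal : star u ⬝ᵥ (((C * S⁻¹ * B + D) + (C * S⁻¹ * B + D)ᴴ) *ᵥ u)
      = (q + star q + d + star d - (s + star s) * h) + (s + star s) * h := by
    rw [Matrix.add_mulVec, dotProduct_add, eF, eFH]
    ring
  rw [hgoal]
  have hh0 : (0:ℂ) ≤ h := hH.posSemidef.dotProduct_mulVec_nonneg x
  exact add_nonneg hv (mul_nonneg (le_of_lt hr) hh0)
end

section
/- Let n, m be positive integers, let A be an n×n, B an n×m, C an m×n and D an m×m complex matrix, and let H be an n×n Hermitian positive-definite matrix. Suppose the (n+m)×(n+m) block matrix Q = [[−HA − A*H, C* − HB], [C − B*H, D + D*]] can be written as Q = Q₁ + [[Δ, 0], [0, 0]] where Q₁ is positive semidefinite and Δ is an n×n positive-definite matrix. Then there exists ε > 0 such that for every s ∈ ℂ with Re s > −ε, the matrix s·I_n − A is invertible and, with F(s) = C(s·I_n − A)^{-1}B + D, the matrix F(s) + F(s)* is positive semidefinite. (This is the sufficiency direction of the Kalman–Yakubovich–Popov lemma for strictly positive real functions.) -/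
open Matrix ComplexOrder

private lemma star_dot_conjT {k l : Type*} [Fintype k] [Fintype l]
    (M : Matrix k l ℂ) (u : l → ℂ) (v : k → ℂ) :
    star u ⬝ᵥ (Mᴴ *ᵥ v) = star (M *ᵥ u) ⬝ᵥ v := by
  rw [Matrix.star_mulVec, Matrix.dotProduct_mulVec]

private lemma quad_norm_bound {k : Type*} [Fintype k] (M : Matrix k k ℂ) (x : k → ℂ) :
    ‖star x ⬝ᵥ (M *ᵥ x)‖ ≤ (∑ i, ∑ j, ‖M i j‖) * (∑ i, ‖x i‖ ^ 2) := by
  classical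
  have key : ∀ i j : k, ‖star (x i) * (M i j * x j)‖ ≤ ‖M i j‖ * ∑ l, ‖x l‖ ^ 2 := by
    intro i j
    have hi : ‖x i‖ ^ 2 ≤ ∑ l, ‖x l‖ ^ 2 :=
      Finset.single_le_sum (f := fun l => ‖x l‖ ^ 2) (fun l _ => sq_nonneg _) (Finset.mem_univ i)
    have hj : ‖x j‖ ^ 2 ≤ ∑ l, ‖x l‖ ^ 2 :=
      Finset.single_le_sum (f := fun l => ‖x l‖ ^ 2) (fun l _ => sq_nonneg _) (Finset.mem_univ j)
    have h1 : ‖x i‖ * ‖x j‖ ≤ ∑ l, ‖x l‖ ^ 2 := by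
      nlinarith [sq_nonneg (‖x i‖ - ‖x j‖)]
    have h2 : ‖star (x i) * (M i j * x j)‖ = ‖M i j‖ * (‖x i‖ * ‖x j‖) := by
      simp [norm_mul]; ring
    rw [h2]
    exact mul_le_mul_of_nonneg_left h1 (norm_nonneg _)
  calc ‖star x ⬝ᵥ (M *ᵥ x)‖ = ‖∑ i, ∑ j, star (x i) * (M i j * x j)‖ := by
        simp [dotProduct, Matrix.mulVec, Finset.mul_sum]
    _ ≤ ∑ i, ∑ j, ‖star (x i) * (M i j * x j)‖ := by
        refine (norm_sum_le _ _).trans ?_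
        exact Finset.sum_le_sum fun i _ => norm_sum_le _ _
    _ ≤ ∑ i, ∑ j, ‖M i j‖ * ∑ l, ‖x l‖ ^ 2 := by
        refine Finset.sum_le_sum fun i _ => Finset.sum_le_sum fun j _ => key i j
    _ = (∑ i, ∑ j, ‖M i j‖) * (∑ l, ‖x l‖ ^ 2) := by
        simp [Finset.sum_mul]

private lemma re_star_dot_self {k : Type*} [Fintype k] (x : k → ℂ) :
    (star x ⬝ᵥ x).re = ∑ i, ‖x i‖ ^ 2 := by
  simp [dotProduct, Complex.re_sum, Pi.star_apply, Complex.mul_re,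
    Complex.sq_norm, Complex.normSq_apply]

open scoped MatrixOrder in
private lemma posdef_lower {k : Type*} [Fintype k] [DecidableEq k]
    {Δ : Matrix k k ℂ} (hΔ : Δ.PosDef) :
    ∃ δ : ℝ, 0 < δ ∧ ∀ x : k → ℂ, δ * (∑ i, ‖x i‖ ^ 2) ≤ (star x ⬝ᵥ (Δ *ᵥ x)).re := by
  set R := CFC.sqrt Δ with hRdef
  have hRH : R.IsHermitian := (CFC.sqrt_nonneg Δ).posSemidef.1
  have hRR : R * R = Δ := CFC.sqrt_mul_sqrt_self Δ hΔ.posSemidef.nonneg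
  have hdetΔ : Δ.det ≠ 0 := hΔ.det_pos.ne'
  have hdetR : R.det ≠ 0 := by
    intro h
    apply hdetΔ
    rw [← hRR, Matrix.det_mul, h, mul_zero]
  have hu : IsUnit R.det := isUnit_iff_ne_zero.mpr hdetR
  have hinv : R * Δ⁻¹ * R = 1 := by
    rw [← hRR, Matrix.mul_inv_rev]
    calc R * (R⁻¹ * R⁻¹) * R = (R * R⁻¹) * (R⁻¹ * R) := by
          simp only [Matrix.mul_assoc]
      _ = 1 := by rw [Matrix.mul_nonsing_inv _ hu, Matrix.nonsing_inv_mul _ hu, Matrix.one_mul]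
  set S' := ∑ i, ∑ j, ‖(Δ⁻¹) i j‖ with hS'
  have hS'0 : 0 ≤ S' := Finset.sum_nonneg fun i _ => Finset.sum_nonneg fun j _ => norm_nonneg _
  refine ⟨1 / (S' + 1), by positivity, fun x => ?_⟩
  have key1 : star x ⬝ᵥ x = star (R *ᵥ x) ⬝ᵥ (Δ⁻¹ *ᵥ (R *ᵥ x)) := by
    rw [← star_dot_conjT R x (Δ⁻¹ *ᵥ (R *ᵥ x)), Matrix.mulVec_mulVec, Matrix.mulVec_mulVec,
      hRH.eq, hinv, Matrix.one_mulVec]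
  have key2 : star (R *ᵥ x) ⬝ᵥ (R *ᵥ x) = star x ⬝ᵥ (Δ *ᵥ x) := by
    rw [← star_dot_conjT R x (R *ᵥ x), Matrix.mulVec_mulVec, hRH.eq, hRR]
  have h1 : (∑ i, ‖x i‖ ^ 2) = (star (R *ᵥ x) ⬝ᵥ (Δ⁻¹ *ᵥ (R *ᵥ x))).re := by
    rw [← key1, re_star_dot_self]
  have h2 : (∑ i, ‖(R *ᵥ x) i‖ ^ 2) = (star x ⬝ᵥ (Δ *ᵥ x)).re := by
    rw [← key2, re_star_dot_self]
  have h3 : (star (R *ᵥ x) ⬝ᵥ (Δ⁻¹ *ᵥ (R *ᵥ x))).re ≤ S' * ∑ i, ‖(R *ᵥ x) i‖ ^ 2 :=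
    (Complex.re_le_norm _).trans ((quad_norm_bound Δ⁻¹ (R *ᵥ x)))
  have h4 : 0 ≤ (star x ⬝ᵥ (Δ *ᵥ x)).re := ((Complex.le_def.mp (hΔ.posSemidef.dotProduct_mulVec_nonneg x)).1)
  rw [h1]
  rw [h2] at h3
  rw [div_mul_eq_mul_div, div_le_iff₀ (by positivity)]
  nlinarith

private lemma q1_form {n m : ℕ}
    (A : Matrix (Fin n) (Fin n) ℂ) (B : Matrix (Fin n) (Fin m) ℂ)
    (C : Matrix (Fin m) (Fin n) ℂ) (D : Matrix (Fin m) (Fin m) ℂ)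
    (H : Matrix (Fin n) (Fin n) ℂ)
    (Q₁ : Matrix (Fin n ⊕ Fin m) (Fin n ⊕ Fin m) ℂ)
    (Δ : Matrix (Fin n) (Fin n) ℂ)
    (hQ : Matrix.fromBlocks (-(H * A) - Aᴴ * H) (Cᴴ - H * B)
      (C - Bᴴ * H) (D + Dᴴ) = Q₁ + Matrix.fromBlocks Δ 0 0 0)
    (x : Fin n → ℂ) (y : Fin m → ℂ) :
    star (Sum.elim x y) ⬝ᵥ (Q₁ *ᵥ Sum.elim x y) =
      (star y ⬝ᵥ (C *ᵥ x) + star (C *ᵥ x) ⬝ᵥ y + star y ⬝ᵥ (D *ᵥ y) + star (D *ᵥ y) ⬝ᵥ y)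
      - (star x ⬝ᵥ (H *ᵥ (B *ᵥ y)) + star (B *ᵥ y) ⬝ᵥ (H *ᵥ x))
      - star x ⬝ᵥ (H *ᵥ (A *ᵥ x)) - star (A *ᵥ x) ⬝ᵥ (H *ᵥ x)
      - star x ⬝ᵥ (Δ *ᵥ x) := by
  have hQ₁eq : Q₁ = Matrix.fromBlocks (-(H * A) - Aᴴ * H) (Cᴴ - H * B)
      (C - Bᴴ * H) (D + Dᴴ) - Matrix.fromBlocks Δ 0 0 0 := by
    rw [eq_sub_iff_add_eq, ← hQ]
  have hstar : star (Sum.elim x y) = Sum.elim (star x) (star y) := by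
    funext i; cases i <;> rfl
  rw [hQ₁eq, Matrix.sub_mulVec, Matrix.fromBlocks_mulVec, Matrix.fromBlocks_mulVec, hstar,
    dotProduct_sub, sumElim_dotProduct_sumElim, sumElim_dotProduct_sumElim]
  simp only [Sum.elim_comp_inl, Sum.elim_comp_inr, Matrix.sub_mulVec, Matrix.add_mulVec,
    Matrix.neg_mulVec, ← Matrix.mulVec_mulVec, dotProduct_add, dotProduct_sub, dotProduct_neg,
    Matrix.mulVec_zero, dotProduct_zero, Matrix.zero_mulVec, star_dot_conjT]
  ring

theorem kyp_strictly_positive_real_sufficiency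
    (n m : ℕ) (hn : 0 < n) (hm : 0 < m)
    (A : Matrix (Fin n) (Fin n) ℂ) (B : Matrix (Fin n) (Fin m) ℂ)
    (C : Matrix (Fin m) (Fin n) ℂ) (D : Matrix (Fin m) (Fin m) ℂ)
    (H : Matrix (Fin n) (Fin n) ℂ) (hH : H.PosDef)
    (Q₁ : Matrix (Fin n ⊕ Fin m) (Fin n ⊕ Fin m) ℂ) (hQ₁ : Q₁.PosSemidef)
    (Δ : Matrix (Fin n) (Fin n) ℂ) (hΔ : Δ.PosDef)
    (hQ : Matrix.fromBlocks (-(H * A) - Aᴴ * H) (Cᴴ - H * B)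
      (C - Bᴴ * H) (D + Dᴴ) = Q₁ + Matrix.fromBlocks Δ 0 0 0) :
    ∃ ε : ℝ, 0 < ε ∧ ∀ s : ℂ, -ε < s.re →
      IsUnit (s • (1 : Matrix (Fin n) (Fin n) ℂ) - A) ∧
      ((C * (s • (1 : Matrix (Fin n) (Fin n) ℂ) - A)⁻¹ * B + D) +
        (C * (s • (1 : Matrix (Fin n) (Fin n) ℂ) - A)⁻¹ * B + D)ᴴ).PosSemidef := by
  classical
  obtain ⟨δ, hδ, hlow⟩ := posdef_lower hΔ
  set SH : ℝ := ∑ i, ∑ j, ‖H i j‖ with hSH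
  have hSH0 : 0 ≤ SH := Finset.sum_nonneg fun i _ => Finset.sum_nonneg fun j _ => norm_nonneg _
  refine ⟨δ / (2 * (SH + 1)), by positivity, ?_⟩
  have hε0 : 0 < δ / (2 * (SH + 1)) := by positivity
  have hHx : ∀ x : Fin n → ℂ, 0 ≤ (star x ⬝ᵥ (H *ᵥ x)).re ∧ (star x ⬝ᵥ (H *ᵥ x)).im = 0 := by
    intro x
    have := hH.posSemidef.dotProduct_mulVec_nonneg x
    rw [Complex.le_def] at this
    exact ⟨this.1, this.2.symm⟩
  have hΔx : ∀ x : Fin n → ℂ, 0 ≤ (star x ⬝ᵥ (Δ *ᵥ x)).re ∧ (star x ⬝ᵥ (Δ *ᵥ x)).im = 0 := by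
    intro x
    have := hΔ.posSemidef.dotProduct_mulVec_nonneg x
    rw [Complex.le_def] at this
    exact ⟨this.1, this.2.symm⟩
  have hHup : ∀ x : Fin n → ℂ, (star x ⬝ᵥ (H *ᵥ x)).re ≤ SH * ∑ i, ‖x i‖ ^ 2 := fun x =>
    (Complex.re_le_norm _).trans (quad_norm_bound H x)
  have hkey : ∀ σ : ℝ, -(δ / (2 * (SH + 1))) < σ → ∀ x : Fin n → ℂ,
      δ / (2 * (SH + 1)) * (∑ i, ‖x i‖ ^ 2) ≤
        (star x ⬝ᵥ (Δ *ᵥ x)).re + 2 * σ * (star x ⬝ᵥ (H *ᵥ x)).re := by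
    intro σ hσ x
    have h1 := hlow x
    have h2 := hHup x
    have h3 := (hHx x).1
    have hsum : 0 ≤ ∑ i, ‖x i‖ ^ 2 := Finset.sum_nonneg fun i _ => sq_nonneg _
    have hd : δ / (2 * (SH + 1)) * (2 * SH + 1) ≤ δ := by
      rw [div_mul_eq_mul_div, div_le_iff₀ (by positivity)]
      nlinarith
    have e1 : 0 ≤ (σ + δ / (2 * (SH + 1))) * (star x ⬝ᵥ (H *ᵥ x)).re :=
      mul_nonneg (by linarith) h3
    have e2 : δ / (2 * (SH + 1)) * (star x ⬝ᵥ (H *ᵥ x)).re ≤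
        δ / (2 * (SH + 1)) * (SH * ∑ i, ‖x i‖ ^ 2) :=
      mul_le_mul_of_nonneg_left h2 hε0.le
    have e3 : δ / (2 * (SH + 1)) * (2 * SH + 1) * (∑ i, ‖x i‖ ^ 2) ≤ δ * ∑ i, ‖x i‖ ^ 2 :=
      mul_le_mul_of_nonneg_right hd hsum
    nlinarith [e1, e2, e3]
  have hpos : ∀ σ : ℝ, -(δ / (2 * (SH + 1))) < σ → ∀ x : Fin n → ℂ, x ≠ 0 →
      0 < (star x ⬝ᵥ (Δ *ᵥ x)).re + 2 * σ * (star x ⬝ᵥ (H *ᵥ x)).re := by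
    intro σ hσ x hx
    refine lt_of_lt_of_le ?_ (hkey σ hσ x)
    have hex : ∃ i, x i ≠ 0 := by
      by_contra h
      push_neg at h
      exact hx (funext h)
    obtain ⟨i, hi⟩ := hex
    have hp : 0 < ∑ j, ‖x j‖ ^ 2 :=
      Finset.sum_pos' (fun j _ => sq_nonneg _) ⟨i, Finset.mem_univ i, pow_pos (norm_pos_iff.mpr hi) 2⟩
    exact mul_pos hε0 hp
  intro s hs
  -- invertibility
  have hdS : (s • (1 : Matrix (Fin n) (Fin n) ℂ) - A).det ≠ 0 := by
    intro hd0
    obtain ⟨v, hv0, hv⟩ := (Matrix.exists_mulVec_eq_zero_iff).mpr hd0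
    have hAv : A *ᵥ v = s • v := by
      have hsub : s • v - A *ᵥ v = 0 := by
        rw [← hv, Matrix.sub_mulVec, Matrix.smul_mulVec, Matrix.one_mulVec]
      exact (sub_eq_zero.mp hsub).symm
    have hq := hQ₁.dotProduct_mulVec_nonneg (Sum.elim v 0)
    rw [q1_form A B C D H Q₁ Δ hQ v 0] at hq
    have heq : (star (0 : Fin m → ℂ) ⬝ᵥ (C *ᵥ v) + star (C *ᵥ v) ⬝ᵥ (0 : Fin m → ℂ) +
          star (0 : Fin m → ℂ) ⬝ᵥ (D *ᵥ (0 : Fin m → ℂ)) +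
          star (D *ᵥ (0 : Fin m → ℂ)) ⬝ᵥ (0 : Fin m → ℂ))
        - (star v ⬝ᵥ (H *ᵥ (B *ᵥ (0 : Fin m → ℂ))) + star (B *ᵥ (0 : Fin m → ℂ)) ⬝ᵥ (H *ᵥ v))
        - star v ⬝ᵥ (H *ᵥ (A *ᵥ v)) - star (A *ᵥ v) ⬝ᵥ (H *ᵥ v)
        - star v ⬝ᵥ (Δ *ᵥ v) =
        -(s * (star v ⬝ᵥ (H *ᵥ v))) - (starRingEnd ℂ) s * (star v ⬝ᵥ (H *ᵥ v))
          - star v ⬝ᵥ (Δ *ᵥ v) := by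
      rw [hAv]
      simp only [Matrix.mulVec_zero, dotProduct_zero, star_zero, zero_dotProduct,
        Matrix.mulVec_smul, dotProduct_smul, star_smul, smul_dotProduct, smul_eq_mul,
        Complex.star_def]
      ring
    rw [heq, Complex.le_def] at hq
    have hqre := hq.1
    have him := (hHx v).2
    simp only [Complex.zero_re, Complex.sub_re, Complex.neg_re, Complex.mul_re,
      Complex.conj_re, Complex.conj_im, him, mul_zero, sub_zero, neg_mul, zero_mul] at hqre
    have hps := hpos s.re hs v hv0
    linarith
  refine ⟨(Matrix.isUnit_iff_isUnit_det _).mpr (isUnit_iff_ne_zero.mpr hdS),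
    Matrix.posSemidef_iff_dotProduct_mulVec.mpr ⟨?_, ?_⟩⟩
  · exact Matrix.isHermitian_add_transpose_self _
  intro y
  set S : Matrix (Fin n) (Fin n) ℂ := s • (1 : Matrix (Fin n) (Fin n) ℂ) - A with hSdef
  set x : Fin n → ℂ := S⁻¹ *ᵥ (B *ᵥ y) with hxdef
  have hBy : B *ᵥ y = s • x - A *ᵥ x := by
    have h1 : S *ᵥ x = B *ᵥ y := by
      rw [hxdef, Matrix.mulVec_mulVec, Matrix.mul_nonsing_inv _ (isUnit_iff_ne_zero.mpr hdS),
        Matrix.one_mulVec]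
    rw [← h1, hSdef, Matrix.sub_mulVec, Matrix.smul_mulVec, Matrix.one_mulVec]
  have hq := hQ₁.dotProduct_mulVec_nonneg (Sum.elim x y)
  rw [q1_form A B C D H Q₁ Δ hQ x y] at hq
  have hcross : star x ⬝ᵥ (H *ᵥ (B *ᵥ y)) + star (B *ᵥ y) ⬝ᵥ (H *ᵥ x)
      = s * (star x ⬝ᵥ (H *ᵥ x)) + (starRingEnd ℂ) s * (star x ⬝ᵥ (H *ᵥ x))
        - star x ⬝ᵥ (H *ᵥ (A *ᵥ x)) - star (A *ᵥ x) ⬝ᵥ (H *ᵥ x) := by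
    rw [hBy]
    simp only [Matrix.mulVec_sub, Matrix.mulVec_smul, dotProduct_sub, dotProduct_smul,
      star_sub, star_smul, sub_dotProduct, smul_dotProduct, smul_eq_mul, Complex.star_def]
    ring
  rw [hcross] at hq
  have hFy : (C * S⁻¹ * B + D) *ᵥ y = C *ᵥ x + D *ᵥ y := by
    rw [Matrix.add_mulVec, ← Matrix.mulVec_mulVec, ← Matrix.mulVec_mulVec, ← hxdef]
  have hlhs : star y ⬝ᵥ (((C * S⁻¹ * B + D) + (C * S⁻¹ * B + D)ᴴ) *ᵥ y)
      = star y ⬝ᵥ (C *ᵥ x) + star (C *ᵥ x) ⬝ᵥ y + star y ⬝ᵥ (D *ᵥ y) + star (D *ᵥ y) ⬝ᵥ y := by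
    rw [Matrix.add_mulVec, dotProduct_add, star_dot_conjT, hFy, dotProduct_add, star_add,
      add_dotProduct]
    ring
  rw [hlhs]
  have hE : star y ⬝ᵥ (C *ᵥ x) + star (C *ᵥ x) ⬝ᵥ y + star y ⬝ᵥ (D *ᵥ y) + star (D *ᵥ y) ⬝ᵥ y
      = ((star y ⬝ᵥ (C *ᵥ x) + star (C *ᵥ x) ⬝ᵥ y + star y ⬝ᵥ (D *ᵥ y) + star (D *ᵥ y) ⬝ᵥ y)
        - (s * (star x ⬝ᵥ (H *ᵥ x)) + (starRingEnd ℂ) s * (star x ⬝ᵥ (H *ᵥ x))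
          - star x ⬝ᵥ (H *ᵥ (A *ᵥ x)) - star (A *ᵥ x) ⬝ᵥ (H *ᵥ x))
        - star x ⬝ᵥ (H *ᵥ (A *ᵥ x)) - star (A *ᵥ x) ⬝ᵥ (H *ᵥ x)
        - star x ⬝ᵥ (Δ *ᵥ x))
        + star x ⬝ᵥ (Δ *ᵥ x) + ((2 * s.re : ℝ) : ℂ) * (star x ⬝ᵥ (H *ᵥ x)) := by
    rw [← Complex.add_conj]
    ring
  have hd0 := hΔx x
  have hh0 := hHx x
  rw [hE, Complex.le_def]
  rw [Complex.le_def] at hq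
  simp only [Complex.zero_re, Complex.zero_im] at hq
  have hk := hkey s.re hs x
  have hnn : 0 ≤ δ / (2 * (SH + 1)) * ∑ i, ‖x i‖ ^ 2 :=
    mul_nonneg hε0.le (Finset.sum_nonneg fun i _ => sq_nonneg _)
  constructor
  · simp only [Complex.add_re, Complex.zero_re, Complex.mul_re, Complex.ofReal_re,
      Complex.ofReal_im, hh0.2, mul_zero, zero_mul, sub_zero]
    linarith [hq.1, hd0.1, hh0.1]
  · simp only [Complex.add_im, Complex.zero_im, Complex.mul_im, Complex.ofReal_re,
      Complex.ofReal_im, hh0.2, hd0.2, mul_zero, zero_mul, add_zero]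
    linarith [hq.2]
end

section
/- Let n, m be positive integers, let A be an n×n, B an n×m, C an m×n and D an m×m complex matrix, and let H be an n×n Hermitian positive-definite matrix. Suppose the (n+m)×(n+m) block matrix Q = [[−HA − A*H, C* − HB], [C − B*H, D + D*]] is positive definite. Then for every s ∈ ℂ with Re s > 0, the matrix s·I_n − A is invertible and, with F(s) = C(s·I_n − A)^{-1}B + D, the matrix F(s) + F(s)* is positive definite. (This is the sufficiency direction of the Kalman–Yakubovich–Popov lemma for hyper-positive real functions.) -/
open Matrix ComplexOrder

lemma star_dot_conjT_s15 {m n : ℕ} (M : Matrix (Fin m) (Fin n) ℂ) (v : Fin n → ℂ) (w : Fin m → ℂ) :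
    star v ⬝ᵥ (Mᴴ *ᵥ w) = star (M *ᵥ v) ⬝ᵥ w := by
  rw [dotProduct_mulVec, ← star_mulVec]

lemma kyp_key {n m : ℕ}
    (A : Matrix (Fin n) (Fin n) ℂ) (B : Matrix (Fin n) (Fin m) ℂ)
    (C : Matrix (Fin m) (Fin n) ℂ) (D : Matrix (Fin m) (Fin m) ℂ)
    (H : Matrix (Fin n) (Fin n) ℂ) (s : ℂ)
    (x : Fin n → ℂ) (u : Fin m → ℂ)
    (hx : A *ᵥ x = s • x - B *ᵥ u) :
    star u ⬝ᵥ (C *ᵥ x + D *ᵥ u) + star (C *ᵥ x + D *ᵥ u) ⬝ᵥ u =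
      star (Sum.elim x u) ⬝ᵥ
        (Matrix.fromBlocks (-(H * A) - Aᴴ * H) (Cᴴ - H * B)
          (C - Bᴴ * H) (D + Dᴴ)) *ᵥ (Sum.elim x u)
      + (s + star s) * (star x ⬝ᵥ H *ᵥ x) := by
  rw [Function.star_sumElim, fromBlocks_mulVec, sumElim_dotProduct_sumElim]
  simp only [Sum.elim_comp_inl, Sum.elim_comp_inr]
  simp only [sub_mulVec, add_mulVec, neg_mulVec, dotProduct_add, dotProduct_sub,
    dotProduct_neg, ← mulVec_mulVec]
  rw [star_dot_conjT_s15 A, star_dot_conjT_s15 B, star_dot_conjT_s15 C, star_dot_conjT_s15 D, hx]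
  simp only [star_sub, star_smul, mulVec_smul, mulVec_sub, dotProduct_smul, dotProduct_sub, sub_dotProduct,
    add_dotProduct, smul_dotProduct, smul_eq_mul, star_add]
  ring

theorem kyp_hyper_positive_real_sufficiency
    (n m : ℕ) (hn : 0 < n) (hm : 0 < m)
    (A : Matrix (Fin n) (Fin n) ℂ) (B : Matrix (Fin n) (Fin m) ℂ)
    (C : Matrix (Fin m) (Fin n) ℂ) (D : Matrix (Fin m) (Fin m) ℂ)
    (H : Matrix (Fin n) (Fin n) ℂ) (hH : H.PosDef)
    (hQ : (Matrix.fromBlocks (-(H * A) - Aᴴ * H) (Cᴴ - H * B)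
      (C - Bᴴ * H) (D + Dᴴ)).PosDef) :
    ∀ s : ℂ, 0 < s.re →
      IsUnit (s • (1 : Matrix (Fin n) (Fin n) ℂ) - A) ∧
      ((C * (s • (1 : Matrix (Fin n) (Fin n) ℂ) - A)⁻¹ * B + D) +
        (C * (s • (1 : Matrix (Fin n) (Fin n) ℂ) - A)⁻¹ * B + D)ᴴ).PosDef := by
  intro s hs
  set M : Matrix (Fin n) (Fin n) ℂ := s • (1 : Matrix (Fin n) (Fin n) ℂ) - A with hM
  have hres : 0 < s + star s := by
    have : s + star s = ((2 * s.re : ℝ) : ℂ) := Complex.add_conj s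
    rw [this, Complex.zero_lt_real]
    linarith
  -- determinant nonzero
  have hdet : M.det ≠ 0 := by
    intro h0
    obtain ⟨v, hv, hMv⟩ := (Matrix.exists_mulVec_eq_zero_iff).2 h0
    have hAv : A *ᵥ v = s • v - B *ᵥ (0 : Fin m → ℂ) := by
      have : (s • (1 : Matrix (Fin n) (Fin n) ℂ)) *ᵥ v - A *ᵥ v = 0 := by
        rw [← sub_mulVec]; exact hMv
      have h1 : A *ᵥ v = s • v := by
        have := sub_eq_zero.mp this
        rw [smul_mulVec, one_mulVec] at this
        exact this.symm
      simp [h1]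
    have hkey := kyp_key A B C D H s v (0 : Fin m → ℂ) hAv
    simp only [mulVec_zero, add_zero, star_zero, zero_dotProduct, dotProduct_zero] at hkey
    have hq : 0 < star (Sum.elim v (0 : Fin m → ℂ)) ⬝ᵥ
        (Matrix.fromBlocks (-(H * A) - Aᴴ * H) (Cᴴ - H * B)
          (C - Bᴴ * H) (D + Dᴴ)) *ᵥ (Sum.elim v (0 : Fin m → ℂ)) := by
      refine hQ.dotProduct_mulVec_pos (fun h => hv (funext fun i => congrFun h (Sum.inl i)))
    have hh : 0 < star v ⬝ᵥ H *ᵥ v := hH.dotProduct_mulVec_pos hv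
    have : (0 : ℂ) < star (Sum.elim v (0 : Fin m → ℂ)) ⬝ᵥ
        (Matrix.fromBlocks (-(H * A) - Aᴴ * H) (Cᴴ - H * B)
          (C - Bᴴ * H) (D + Dᴴ)) *ᵥ (Sum.elim v (0 : Fin m → ℂ))
        + (s + star s) * (star v ⬝ᵥ H *ᵥ v) :=
      add_pos hq (mul_pos hres hh)
    rw [← hkey] at this
    exact lt_irrefl 0 this
  have hunit : IsUnit M := (Matrix.isUnit_iff_isUnit_det M).2 (isUnit_iff_ne_zero.2 hdet)
  refine ⟨hunit, posDef_iff_dotProduct_mulVec.mpr ⟨?_, ?_⟩⟩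
  · show _ = _
    rw [conjTranspose_add, conjTranspose_conjTranspose, add_comm]
  · intro u hu
    set x : Fin n → ℂ := M⁻¹ *ᵥ (B *ᵥ u) with hxdef
    have hMx : M *ᵥ x = B *ᵥ u := by
      rw [hxdef, mulVec_mulVec, Matrix.mul_nonsing_inv M (isUnit_iff_ne_zero.2 hdet),
        one_mulVec]
    have hAx : A *ᵥ x = s • x - B *ᵥ u := by
      have : (s • (1 : Matrix (Fin n) (Fin n) ℂ)) *ᵥ x - A *ᵥ x = B *ᵥ u := by
        rw [← sub_mulVec]; exact hMx
      rw [smul_mulVec, one_mulVec] at this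
      rw [← this]; ring_nf
    have hF : (C * M⁻¹ * B + D) *ᵥ u = C *ᵥ x + D *ᵥ u := by
      rw [add_mulVec, hxdef, ← mulVec_mulVec, ← mulVec_mulVec]
    have hexp : star u ⬝ᵥ ((C * M⁻¹ * B + D) + (C * M⁻¹ * B + D)ᴴ) *ᵥ u
        = star u ⬝ᵥ (C *ᵥ x + D *ᵥ u) + star (C *ᵥ x + D *ᵥ u) ⬝ᵥ u := by
      rw [add_mulVec, dotProduct_add, star_dot_conjT_s15, hF]
    rw [hexp, kyp_key A B C D H s x u hAx]
    have hq : 0 < star (Sum.elim x u) ⬝ᵥ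
        (Matrix.fromBlocks (-(H * A) - Aᴴ * H) (Cᴴ - H * B)
          (C - Bᴴ * H) (D + Dᴴ)) *ᵥ (Sum.elim x u) :=
      hQ.dotProduct_mulVec_pos (fun h => hu (funext fun i => congrFun h (Sum.inr i)))
    have hh : 0 ≤ star x ⬝ᵥ H *ᵥ x := hH.posSemidef.dotProduct_mulVec_nonneg x
    exact add_pos_of_pos_of_nonneg hq (mul_nonneg hres.le hh)
end

section
/- Let n, m be positive integers, let A be an n×n, B an n×m, C an m×n and D an m×m complex matrix, and let H be an n×n Hermitian positive-definite matrix. Then the following are equivalent: (1) the block matrix diag(−H, I_m)·[[A, B],[C, D]] + [[A, B],[C, D]]*·diag(−H, I_m) is positive definite; (2) there exist real ε > 0 and δ > 0 such that the block matrix diag(−H, I_m)·[[A + ε·I_n, B],[C, D − δ·I_m]] + [[A + ε·I_n, B],[C, D − δ·I_m]]*·diag(−H, I_m) is positive semidefinite. -/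
open Matrix ComplexOrder



variable {ι : Type*} [Fintype ι] [DecidableEq ι]

lemma sub_smul_one_posSemidef {S : Matrix ι ι ℂ} (hS : S.IsHermitian) {c : ℝ}
    (h : ∀ i, c ≤ hS.eigenvalues i) : (S - (c : ℂ) • 1).PosSemidef := by
  have hU : (hS.eigenvectorUnitary : Matrix ι ι ℂ) * (star hS.eigenvectorUnitary : Matrix ι ι ℂ) = 1 :=
    Unitary.coe_mul_star_self _
  have hid : (c : ℂ) • (1 : Matrix ι ι ℂ) =
      (hS.eigenvectorUnitary : Matrix ι ι ℂ) * ((c : ℂ) • 1) *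
        (star hS.eigenvectorUnitary : Matrix ι ι ℂ) := by
    rw [Matrix.mul_smul, Matrix.mul_one, Matrix.smul_mul, hU]
  have key : S - (c : ℂ) • 1 =
      (hS.eigenvectorUnitary : Matrix ι ι ℂ) *
        diagonal (fun i => (RCLike.ofReal (hS.eigenvalues i - c) : ℂ)) *
        (star hS.eigenvectorUnitary : Matrix ι ι ℂ) := by
    conv_lhs => rw [hS.spectral_theorem, Unitary.conjStarAlgAut_apply, hid]
    rw [← Matrix.sub_mul, ← Matrix.mul_sub, smul_one_eq_diagonal, diagonal_sub]
    congr 2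
    ext i j
    rcases eq_or_ne i j with rfl | hij
    · simp only [diagonal_apply_eq, Function.comp_apply]
      rw [RCLike.ofReal_sub]
      rfl
    · simp [diagonal_apply_ne _ hij]
  rw [key, show (star hS.eigenvectorUnitary : Matrix ι ι ℂ) = (hS.eigenvectorUnitary : Matrix ι ι ℂ)ᴴ from rfl]
  refine Matrix.PosSemidef.mul_mul_conjTranspose_same ?_ _
  rw [Matrix.posSemidef_diagonal_iff]
  intro i
  rw [RCLike.ofReal_nonneg]
  exact sub_nonneg.mpr (h i)

lemma smul_one_sub_posSemidef {S : Matrix ι ι ℂ} (hS : S.IsHermitian) {c : ℝ}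
    (h : ∀ i, hS.eigenvalues i ≤ c) : ((c : ℂ) • 1 - S).PosSemidef := by
  have hU : (hS.eigenvectorUnitary : Matrix ι ι ℂ) * (star hS.eigenvectorUnitary : Matrix ι ι ℂ) = 1 :=
    Unitary.coe_mul_star_self _
  have hid : (c : ℂ) • (1 : Matrix ι ι ℂ) =
      (hS.eigenvectorUnitary : Matrix ι ι ℂ) * ((c : ℂ) • 1) *
        (star hS.eigenvectorUnitary : Matrix ι ι ℂ) := by
    rw [Matrix.mul_smul, Matrix.mul_one, Matrix.smul_mul, hU]
  have key : (c : ℂ) • 1 - S =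
      (hS.eigenvectorUnitary : Matrix ι ι ℂ) *
        diagonal (fun i => (RCLike.ofReal (c - hS.eigenvalues i) : ℂ)) *
        (star hS.eigenvectorUnitary : Matrix ι ι ℂ) := by
    conv_lhs => rw [hS.spectral_theorem, Unitary.conjStarAlgAut_apply, hid]
    rw [← Matrix.sub_mul, ← Matrix.mul_sub, smul_one_eq_diagonal, diagonal_sub]
    congr 2
    ext i j
    rcases eq_or_ne i j with rfl | hij
    · simp only [diagonal_apply_eq, Function.comp_apply]
      rw [RCLike.ofReal_sub]
      rfl
    · simp [diagonal_apply_ne _ hij]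
  rw [key, show (star hS.eigenvectorUnitary : Matrix ι ι ℂ) = (hS.eigenvectorUnitary : Matrix ι ι ℂ)ᴴ from rfl]
  refine Matrix.PosSemidef.mul_mul_conjTranspose_same ?_ _
  rw [Matrix.posSemidef_diagonal_iff]
  intro i
  rw [RCLike.ofReal_nonneg]
  exact sub_nonneg.mpr (h i)

lemma posSemidef_real_smul {M : Matrix ι ι ℂ} (hM : M.PosSemidef) {r : ℝ} (hr : 0 ≤ r) :
    (r • M).PosSemidef := by
  rw [posSemidef_iff_dotProduct_mulVec] at hM ⊢
  constructor
  · unfold Matrix.IsHermitian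
    rw [conjTranspose_smul, hM.1.eq, star_trivial]
  · intro x
    rw [smul_mulVec, dotProduct_smul]
    exact smul_nonneg hr (hM.2 x)

lemma posDef_real_smul {M : Matrix ι ι ℂ} (hM : M.PosDef) {r : ℝ} (hr : 0 < r) :
    (r • M).PosDef := by
  rw [posDef_iff_dotProduct_mulVec] at hM ⊢
  constructor
  · unfold Matrix.IsHermitian
    rw [conjTranspose_smul, hM.1.eq, star_trivial]
  · intro x hx
    rw [smul_mulVec, dotProduct_smul]
    exact smul_pos hr (hM.2 hx)

lemma posSemidef_fromBlocks_diag {n m : ℕ} {P : Matrix (Fin n) (Fin n) ℂ}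
    {Q : Matrix (Fin m) (Fin m) ℂ} (hP : P.PosSemidef) (hQ : Q.PosSemidef) :
    (fromBlocks P 0 0 Q).PosSemidef := by
  rw [posSemidef_iff_dotProduct_mulVec] at hP hQ ⊢
  constructor
  · unfold Matrix.IsHermitian
    rw [fromBlocks_conjTranspose, hP.1.eq, hQ.1.eq]
    simp
  · intro x
    rw [fromBlocks_mulVec, dotProduct_block]
    simp only [Sum.elim_comp_inl, Sum.elim_comp_inr, zero_mulVec, add_zero, zero_add,
      Matrix.zero_mulVec]
    exact add_nonneg (hP.2 _) (hQ.2 _)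

lemma posDef_fromBlocks_diag {n m : ℕ} {P : Matrix (Fin n) (Fin n) ℂ}
    {Q : Matrix (Fin m) (Fin m) ℂ} (hP : P.PosDef) (hQ : Q.PosDef) :
    (fromBlocks P 0 0 Q).PosDef := by
  have hPs := hP.posSemidef
  have hQs := hQ.posSemidef
  rw [posSemidef_iff_dotProduct_mulVec] at hPs hQs
  rw [posDef_iff_dotProduct_mulVec] at hP hQ ⊢
  constructor
  · unfold Matrix.IsHermitian
    rw [fromBlocks_conjTranspose, hP.1.eq, hQ.1.eq]
    simp
  · intro x hx
    rw [fromBlocks_mulVec, dotProduct_block]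
    simp only [Sum.elim_comp_inl, Sum.elim_comp_inr, zero_mulVec, add_zero, zero_add,
      Matrix.zero_mulVec]
    rcases (show x ∘ Sum.inl ≠ 0 ∨ x ∘ Sum.inr ≠ 0 by
      by_contra hcon
      push_neg at hcon
      apply hx
      ext (i | i)
      · exact congrFun hcon.1 i
      · exact congrFun hcon.2 i) with h | h
    · exact add_pos_of_pos_of_nonneg (hP.2 h) (hQs.2 _)
    · exact add_pos_of_nonneg_of_pos (hPs.2 _) (hQ.2 h)

lemma key_identity_s16 {n m : ℕ}
    (A : Matrix (Fin n) (Fin n) ℂ) (B : Matrix (Fin n) (Fin m) ℂ)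
    (C : Matrix (Fin m) (Fin n) ℂ) (D : Matrix (Fin m) (Fin m) ℂ)
    (H : Matrix (Fin n) (Fin n) ℂ) (ε δ : ℝ) :
    Matrix.fromBlocks (-H) 0 0 (1 : Matrix (Fin m) (Fin m) ℂ) *
        Matrix.fromBlocks (A + ε • 1) B C (D - δ • 1) +
      (Matrix.fromBlocks (A + ε • 1) B C (D - δ • 1))ᴴ *
        Matrix.fromBlocks (-H) 0 0 (1 : Matrix (Fin m) (Fin m) ℂ)
    = (Matrix.fromBlocks (-H) 0 0 (1 : Matrix (Fin m) (Fin m) ℂ) *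
        Matrix.fromBlocks A B C D +
      (Matrix.fromBlocks A B C D)ᴴ *
        Matrix.fromBlocks (-H) 0 0 (1 : Matrix (Fin m) (Fin m) ℂ))
      + Matrix.fromBlocks ((-(2 * ε)) • H) 0 0
          ((-(2 * δ)) • (1 : Matrix (Fin m) (Fin m) ℂ)) := by
  rw [fromBlocks_conjTranspose, fromBlocks_conjTranspose]
  simp only [fromBlocks_multiply, fromBlocks_add, Matrix.mul_zero, Matrix.zero_mul,
    add_zero, zero_add, Matrix.mul_one, Matrix.one_mul, conjTranspose_add, conjTranspose_sub,
    conjTranspose_smul, conjTranspose_one, star_trivial, Matrix.mul_add, Matrix.add_mul,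
    Matrix.mul_sub, Matrix.sub_mul, Matrix.mul_smul, Matrix.smul_mul]
  rw [Matrix.fromBlocks_inj]
  refine ⟨?_, ?_, ?_, ?_⟩ <;> module

lemma real_smul_one_eq {ι : Type*} [Fintype ι] [DecidableEq ι] (c : ℝ) :
    c • (1 : Matrix ι ι ℂ) = (c : ℂ) • 1 := by
  rw [← algebraMap_smul ℂ c (1 : Matrix ι ι ℂ), Complex.coe_algebraMap]

theorem hyper_positive_iff_strictly_positive_shifted
    (n m : ℕ) (hn : 0 < n) (hm : 0 < m)
    (A : Matrix (Fin n) (Fin n) ℂ) (B : Matrix (Fin n) (Fin m) ℂ)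
    (C : Matrix (Fin m) (Fin n) ℂ) (D : Matrix (Fin m) (Fin m) ℂ)
    (H : Matrix (Fin n) (Fin n) ℂ) (hH : H.PosDef) :
    (Matrix.fromBlocks (-H) 0 0 (1 : Matrix (Fin m) (Fin m) ℂ) *
        Matrix.fromBlocks A B C D +
      (Matrix.fromBlocks A B C D)ᴴ *
        Matrix.fromBlocks (-H) 0 0 (1 : Matrix (Fin m) (Fin m) ℂ)).PosDef ↔
    ∃ ε : ℝ, 0 < ε ∧ ∃ δ : ℝ, 0 < δ ∧
      (Matrix.fromBlocks (-H) 0 0 (1 : Matrix (Fin m) (Fin m) ℂ) *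
          Matrix.fromBlocks (A + ε • 1) B C (D - δ • 1) +
        (Matrix.fromBlocks (A + ε • 1) B C (D - δ • 1))ᴴ *
          Matrix.fromBlocks (-H) 0 0 (1 : Matrix (Fin m) (Fin m) ℂ)).PosSemidef := by
  have hne : Nonempty (Fin n) := Fin.pos_iff_nonempty.mp hn
  have hne2 : Nonempty (Fin n ⊕ Fin m) := ⟨Sum.inl ⟨0, hn⟩⟩
  set S := Matrix.fromBlocks (-H) 0 0 (1 : Matrix (Fin m) (Fin m) ℂ) *
        Matrix.fromBlocks A B C D +
      (Matrix.fromBlocks A B C D)ᴴ *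
        Matrix.fromBlocks (-H) 0 0 (1 : Matrix (Fin m) (Fin m) ℂ) with hSdef
  constructor
  · intro hS
    -- smallest eigenvalue of S
    set c : ℝ := Finset.univ.inf' Finset.univ_nonempty hS.1.eigenvalues with hcdef
    have hc_le : ∀ i, c ≤ hS.1.eigenvalues i := fun i => Finset.inf'_le _ (Finset.mem_univ i)
    have hc_pos : 0 < c := by
      obtain ⟨i, -, hi⟩ := Finset.exists_mem_eq_inf' Finset.univ_nonempty hS.1.eigenvalues
      rw [hcdef, hi]
      exact hS.eigenvalues_pos i
    -- largest eigenvalue of H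
    set h : ℝ := Finset.univ.sup' Finset.univ_nonempty hH.1.eigenvalues with hhdef
    have hh_ge : ∀ i, hH.1.eigenvalues i ≤ h := fun i => Finset.le_sup' _ (Finset.mem_univ i)
    have hh_pos : 0 < h := lt_of_lt_of_le (hH.eigenvalues_pos (Classical.arbitrary _)) (hh_ge _)
    refine ⟨c / (4 * h), by positivity, c / 4, by positivity, ?_⟩
    rw [key_identity_s16, ← hSdef]
    have h1 : (S - c • 1).PosSemidef := by
      rw [real_smul_one_eq]
      exact sub_smul_one_posSemidef hS.1 hc_le
    have h2 : (h • (1 : Matrix (Fin n) (Fin n) ℂ) - H).PosSemidef := by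
      rw [real_smul_one_eq]
      exact smul_one_sub_posSemidef hH.1 hh_ge
    have blockeq :
        Matrix.fromBlocks ((-(2 * (c / (4 * h)))) • H) 0 0
            ((-(2 * (c / 4))) • (1 : Matrix (Fin m) (Fin m) ℂ))
          = Matrix.fromBlocks
              ((c / 2) • (1 : Matrix (Fin n) (Fin n) ℂ) +
                (c / (2 * h)) • (h • (1 : Matrix (Fin n) (Fin n) ℂ) - H)) 0 0
              ((c / 2) • (1 : Matrix (Fin m) (Fin m) ℂ))
            - c • (1 : Matrix (Fin n ⊕ Fin m) (Fin n ⊕ Fin m) ℂ) := by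
      rw [show (1 : Matrix (Fin n ⊕ Fin m) (Fin n ⊕ Fin m) ℂ) =
            Matrix.fromBlocks 1 0 0 1 from (fromBlocks_one).symm,
          Matrix.fromBlocks_smul, sub_eq_add_neg, Matrix.fromBlocks_neg,
          Matrix.fromBlocks_add, Matrix.fromBlocks_inj]
      have hh0 : (h : ℝ) ≠ 0 := ne_of_gt hh_pos
      refine ⟨?_, by simp, by simp, ?_⟩
      · match_scalars <;> field_simp <;> ring
      · match_scalars <;> field_simp <;> ring
    have decomp : S + Matrix.fromBlocks ((-(2 * (c / (4 * h)))) • H) 0 0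
          ((-(2 * (c / 4))) • (1 : Matrix (Fin m) (Fin m) ℂ))
        = (S - c • 1) +
          Matrix.fromBlocks
            ((c / 2) • (1 : Matrix (Fin n) (Fin n) ℂ) +
              (c / (2 * h)) • (h • (1 : Matrix (Fin n) (Fin n) ℂ) - H)) 0 0
            ((c / 2) • (1 : Matrix (Fin m) (Fin m) ℂ)) := by
      rw [blockeq]
      abel
    rw [decomp]
    refine Matrix.PosSemidef.add h1 (posSemidef_fromBlocks_diag ?_ ?_)
    · exact Matrix.PosSemidef.add
        (posSemidef_real_smul Matrix.PosSemidef.one (by positivity))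
        (posSemidef_real_smul h2 (by positivity))
    · exact posSemidef_real_smul Matrix.PosSemidef.one (by positivity)
  · rintro ⟨ε, hε, δ, hδ, hsd⟩
    rw [key_identity_s16, ← hSdef] at hsd
    have hzero : Matrix.fromBlocks ((-(2 * ε)) • H) 0 0
          ((-(2 * δ)) • (1 : Matrix (Fin m) (Fin m) ℂ)) +
        Matrix.fromBlocks ((2 * ε) • H) 0 0 ((2 * δ) • (1 : Matrix (Fin m) (Fin m) ℂ)) = 0 := by
      rw [Matrix.fromBlocks_add]
      simp [neg_smul]
    have hS_eq : S = (S + Matrix.fromBlocks ((-(2 * ε)) • H) 0 0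
          ((-(2 * δ)) • (1 : Matrix (Fin m) (Fin m) ℂ))) +
        Matrix.fromBlocks ((2 * ε) • H) 0 0 ((2 * δ) • (1 : Matrix (Fin m) (Fin m) ℂ)) := by
      rw [add_assoc, hzero, add_zero]
    rw [hS_eq]
    exact Matrix.PosDef.posSemidef_add hsd
      (posDef_fromBlocks_diag (posDef_real_smul hH (by positivity))
        (posDef_real_smul Matrix.PosDef.one (by positivity)))
end

section
/- Let n, m be positive integers and let η > 1 be a real number. Let Â be an n×n, B̂ an n×m, Ĉ an m×n and D̂ an m×m complex matrix, and let H be an n×n Hermitian positive-definite matrix. Suppose the (n+m)×(n+m) block matrix [[−HÂ − Â*H, −HB̂], [−B̂*H, I_m]] − ((η+1)/(η−1)) · [[Ĉ*Ĉ, Ĉ*D̂], [D̂*Ĉ, D̂*D̂]] is positive semidefinite. Then for every s ∈ ℂ with Re s > 0, the matrix s·I_n − Â is invertible and, with G(s) = Ĉ(s·I_n − Â)^{-1}B̂ + D̂, the matrix (η−1)·I_m − (η+1)·G(s)*G(s) is positive semidefinite. (This is the sufficiency direction of the quantitative bounded real lemma: G belongs to the class HB_η of η-hyper-bounded real functions.)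 -/
open Matrix ComplexOrder

lemma adj_move {k l : ℕ} (M : Matrix (Fin l) (Fin k) ℂ) (a : Fin k → ℂ) (b : Fin l → ℂ) :
    star a ⬝ᵥ (Mᴴ *ᵥ b) = star (M *ᵥ a) ⬝ᵥ b := by
  rw [star_mulVec, dotProduct_mulVec]

lemma star_sum_elim {k l : ℕ} (a : Fin k → ℂ) (b : Fin l → ℂ) :
    star (Sum.elim a b) = Sum.elim (star a) (star b) := by
  funext i; cases i <;> rfl

theorem quantitative_bounded_real_lemma_sufficiency
    (n m : ℕ) (hn : 0 < n) (hm : 0 < m) (η : ℝ) (hη : 1 < η)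
    (Ahat : Matrix (Fin n) (Fin n) ℂ) (Bhat : Matrix (Fin n) (Fin m) ℂ)
    (Chat : Matrix (Fin m) (Fin n) ℂ) (Dhat : Matrix (Fin m) (Fin m) ℂ)
    (H : Matrix (Fin n) (Fin n) ℂ) (hH : H.PosDef)
    (hQ : (Matrix.fromBlocks (-(H * Ahat) - Ahatᴴ * H) (-(H * Bhat))
        (-(Bhatᴴ * H)) (1 : Matrix (Fin m) (Fin m) ℂ) -
      ((η + 1) / (η - 1)) • Matrix.fromBlocks (Chatᴴ * Chat) (Chatᴴ * Dhat)
        (Dhatᴴ * Chat) (Dhatᴴ * Dhat)).PosSemidef) :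
    ∀ s : ℂ, 0 < s.re →
      IsUnit (s • (1 : Matrix (Fin n) (Fin n) ℂ) - Ahat) ∧
      ((η - 1) • (1 : Matrix (Fin m) (Fin m) ℂ) -
        (η + 1) • ((Chat * (s • (1 : Matrix (Fin n) (Fin n) ℂ) - Ahat)⁻¹ * Bhat + Dhat)ᴴ *
          (Chat * (s • (1 : Matrix (Fin n) (Fin n) ℂ) - Ahat)⁻¹ * Bhat + Dhat))).PosSemidef := by
  have hη1 : (0:ℝ) < η - 1 := by linarith
  set c : ℝ := (η + 1) / (η - 1) with hc_def
  have hc : 0 < c := by positivity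
  -- the key quadratic inequality
  have key : ∀ (s : ℂ) (x : Fin n → ℂ) (u : Fin m → ℂ),
      Ahat *ᵥ x + Bhat *ᵥ u = s • x →
      (c:ℂ) * (star (Chat *ᵥ x + Dhat *ᵥ u) ⬝ᵥ (Chat *ᵥ x + Dhat *ᵥ u))
        + (s + star s) * (star x ⬝ᵥ (H *ᵥ x)) ≤ star u ⬝ᵥ u := by
    intro s x u hrel
    have hBu : Bhat *ᵥ u = s • x - Ahat *ᵥ x := by
      rw [← hrel]; abel
    have h0 := hQ.dotProduct_mulVec_nonneg (Sum.elim x u)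
    rw [sub_mulVec, dotProduct_sub, smul_mulVec, dotProduct_smul] at h0
    have hF1 : star (Sum.elim x u) ⬝ᵥ
        (Matrix.fromBlocks (-(H * Ahat) - Ahatᴴ * H) (-(H * Bhat))
          (-(Bhatᴴ * H)) (1 : Matrix (Fin m) (Fin m) ℂ) *ᵥ Sum.elim x u)
        = star u ⬝ᵥ u - (s + star s) * (star x ⬝ᵥ (H *ᵥ x)) := by
      rw [fromBlocks_mulVec, star_sum_elim, sumElim_dotProduct_sumElim]
      simp only [sub_mulVec, neg_mulVec, ← mulVec_mulVec, one_mulVec, hBu,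
        mulVec_sub, mulVec_smul, star_sub, star_smul, dotProduct_add, dotProduct_sub,
        dotProduct_neg, dotProduct_smul, sub_dotProduct, smul_dotProduct, adj_move,
        smul_eq_mul, RCLike.star_def, Sum.elim_comp_inl, Sum.elim_comp_inr]
      ring
    have hF2 : star (Sum.elim x u) ⬝ᵥ
        (Matrix.fromBlocks (Chatᴴ * Chat) (Chatᴴ * Dhat)
          (Dhatᴴ * Chat) (Dhatᴴ * Dhat) *ᵥ Sum.elim x u)
        = star (Chat *ᵥ x + Dhat *ᵥ u) ⬝ᵥ (Chat *ᵥ x + Dhat *ᵥ u) := by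
      rw [fromBlocks_mulVec, star_sum_elim, sumElim_dotProduct_sumElim]
      simp only [← mulVec_mulVec, dotProduct_add, add_dotProduct, star_add, adj_move,
        Sum.elim_comp_inl, Sum.elim_comp_inr]
      ring
    rw [hF1, hF2, Complex.real_smul] at h0
    have := sub_nonneg.mp h0
    calc (c:ℂ) * (star (Chat *ᵥ x + Dhat *ᵥ u) ⬝ᵥ (Chat *ᵥ x + Dhat *ᵥ u))
          + (s + star s) * (star x ⬝ᵥ (H *ᵥ x))
        ≤ (star u ⬝ᵥ u - (s + star s) * (star x ⬝ᵥ (H *ᵥ x)))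
          + (s + star s) * (star x ⬝ᵥ (H *ᵥ x)) := by
          exact add_le_add_left this _
      _ = star u ⬝ᵥ u := by ring
  intro s hs
  have hsum : s + star s = ((2 * s.re : ℝ) : ℂ) := by
    rw [RCLike.star_def, Complex.add_conj]
  have hsum_pos : 0 < s + star s := by
    rw [hsum]; exact_mod_cast (by linarith : (0:ℝ) < 2 * s.re)
  -- invertibility
  have hdet : (s • (1 : Matrix (Fin n) (Fin n) ℂ) - Ahat).det ≠ 0 := by
    intro hdet0
    obtain ⟨v, hv0, hv⟩ := (Matrix.exists_mulVec_eq_zero_iff).mpr hdet0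
    have hAv : Ahat *ᵥ v = s • v := by
      have h' := hv
      rw [sub_mulVec, smul_mulVec, one_mulVec, sub_eq_zero] at h'
      exact h'.symm
    have hrel : Ahat *ᵥ v + Bhat *ᵥ (0 : Fin m → ℂ) = s • v := by
      rw [mulVec_zero, add_zero, hAv]
    have hk := key s v 0 hrel
    simp only [mulVec_zero, add_zero, star_zero, zero_dotProduct, dotProduct_zero] at hk
    have h1 : 0 ≤ (c:ℂ) * (star (Chat *ᵥ v) ⬝ᵥ (Chat *ᵥ v)) :=
      mul_nonneg (by exact_mod_cast hc.le) (dotProduct_star_self_nonneg _)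
    have h2 : 0 < (s + star s) * (star v ⬝ᵥ (H *ᵥ v)) :=
      mul_pos hsum_pos (hH.dotProduct_mulVec_pos hv0)
    have : (0:ℂ) < (c:ℂ) * (star (Chat *ᵥ v) ⬝ᵥ (Chat *ᵥ v))
        + (s + star s) * (star v ⬝ᵥ (H *ᵥ v)) := by
      exact add_pos_of_nonneg_of_pos h1 h2
    exact absurd (lt_of_lt_of_le this hk) (lt_irrefl 0)
  refine ⟨(Matrix.isUnit_iff_isUnit_det _).mpr (isUnit_iff_ne_zero.mpr hdet), ?_⟩
  set M := s • (1 : Matrix (Fin n) (Fin n) ℂ) - Ahat with hM_def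
  have hMinv : M * M⁻¹ = 1 := Matrix.mul_nonsing_inv _ (isUnit_iff_ne_zero.mpr hdet)
  set G := Chat * M⁻¹ * Bhat + Dhat with hG_def
  refine PosSemidef.of_dotProduct_mulVec_nonneg ?_ ?_
  · -- Hermitian
    unfold Matrix.IsHermitian
    rw [conjTranspose_sub, conjTranspose_smul, conjTranspose_smul, conjTranspose_one,
      conjTranspose_mul, conjTranspose_conjTranspose]
    simp [star_trivial]
  · intro u
    set x : Fin n → ℂ := M⁻¹ *ᵥ (Bhat *ᵥ u) with hx_def
    have hMx : M *ᵥ x = Bhat *ᵥ u := by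
      rw [hx_def, mulVec_mulVec, hMinv, one_mulVec]
    have hrel : Ahat *ᵥ x + Bhat *ᵥ u = s • x := by
      rw [← hMx, ← add_mulVec, hM_def]
      simp [add_sub_cancel, smul_mulVec, one_mulVec]
    have hy : G *ᵥ u = Chat *ᵥ x + Dhat *ᵥ u := by
      rw [hG_def, add_mulVec, hx_def, ← mulVec_mulVec, ← mulVec_mulVec]
    have hk := key s x u hrel
    rw [← hy] at hk
    have hT : 0 ≤ (s + star s) * (star x ⬝ᵥ (H *ᵥ x)) :=
      mul_nonneg hsum_pos.le (hH.posSemidef.dotProduct_mulVec_nonneg x)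
    have hcy : (c:ℂ) * (star (G *ᵥ u) ⬝ᵥ (G *ᵥ u)) ≤ star u ⬝ᵥ u :=
      le_trans (le_add_of_nonneg_right hT) hk
    have hmul : ((η - 1 : ℝ):ℂ) * ((c:ℂ) * (star (G *ᵥ u) ⬝ᵥ (G *ᵥ u)))
        ≤ ((η - 1 : ℝ):ℂ) * (star u ⬝ᵥ u) :=
      mul_le_mul_of_nonneg_left hcy (by exact_mod_cast hη1.le)
    have hcoef : ((η - 1 : ℝ):ℂ) * (c:ℂ) = ((η + 1 : ℝ):ℂ) := by
      rw [← Complex.ofReal_mul, hc_def]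
      congr 1
      field_simp
    have hfinal : ((η + 1 : ℝ):ℂ) * (star (G *ᵥ u) ⬝ᵥ (G *ᵥ u))
        ≤ ((η - 1 : ℝ):ℂ) * (star u ⬝ᵥ u) := by
      calc ((η + 1 : ℝ):ℂ) * (star (G *ᵥ u) ⬝ᵥ (G *ᵥ u))
          = ((η - 1 : ℝ):ℂ) * ((c:ℂ) * (star (G *ᵥ u) ⬝ᵥ (G *ᵥ u))) := by
            rw [← mul_assoc, hcoef]
        _ ≤ _ := hmul
    have hgoal : star u ⬝ᵥ (((η - 1) • (1 : Matrix (Fin m) (Fin m) ℂ) -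
        (η + 1) • (Gᴴ * G)) *ᵥ u)
        = ((η - 1 : ℝ):ℂ) * (star u ⬝ᵥ u)
          - ((η + 1 : ℝ):ℂ) * (star (G *ᵥ u) ⬝ᵥ (G *ᵥ u)) := by
      rw [sub_mulVec, dotProduct_sub, smul_mulVec, smul_mulVec,
        one_mulVec, dotProduct_smul, dotProduct_smul, ← mulVec_mulVec, adj_move,
        Complex.real_smul, Complex.real_smul]
    rw [hgoal]
    exact sub_nonneg.mpr hfinal
end
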